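/- arXiv:1711.05610 — 5 statements merged into one kernel-verified Lean document; each statement's English description precedes it below -/
import Mathlib

section
/- Fix integers n, m ≥ 1, an obfuscating set W, a probability distribution F on pairs (G₁,G₂) of graphs on V₁ and V₂ with core vertices C that is supported on pairs of asymmetric graphs, and a vertex of interest v* ∈ C. Then there exists a vertex nomination scheme Ψ that is simultaneously level-k Bayes optimal for every level: for every obfuscating function 𝔬, every k ∈ {1,…,m−1}, and every vertex nomination scheme Φ, one has L_k(Ψ, v*) ≤ L_k(Φ, v*), where the level-k errors are computed with respect to 𝔬. -/
open Filter MeasureTheory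
open scoped ENNReal

namespace VN

/-- `w` lies in the automorphism orbit `I(u;g)` of `u` in the graph `g`. -/
def InOrbit {V : Type*} (g : SimpleGraph V) (u w : V) : Prop :=
  ∃ σ : SimpleGraph.Iso g g, σ u = w

/-- A graph is asymmetric if its only automorphism is the identity. -/
def IsAsym {V : Type*} (g : SimpleGraph V) : Prop :=
  ∀ σ : SimpleGraph.Iso g g, ∀ v, σ v = v

/-- The obfuscated graph `𝔬(g₂)`: relabel the vertices of `g₂` along the bijection `o`. -/
def obf {m : ℕ} {W : Type*} (o : Fin m ≃ W) (g : SimpleGraph (Fin m)) : SimpleGraph W :=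
  SimpleGraph.map o.toEmbedding g

/-- The (1-indexed) rank of `w` in the total ordering of `W` encoded by `T : W ≃ Fin m`. -/
def vnRank {m : ℕ} {W : Type*} (T : W ≃ Fin m) (w : W) : ℕ := (T w).val + 1

/-- A vertex nomination scheme: to each graph `g₁` on `V₁ = Fin n`, obfuscated graph on `W`,
and vertex of interest in `V₁`, it assigns a total ordering of `W` (encoded as `W ≃ Fin m`),
subject to the consistency property: the set of ranks assigned to the image of each
automorphism orbit of `g₂` does not depend on the obfuscating function used. -/
structure VNScheme (n m : ℕ) (W : Type*) where
  toFun : SimpleGraph (Fin n) → SimpleGraph W → Fin n → (W ≃ Fin m)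
  consistent : ∀ (g₁ : SimpleGraph (Fin n)) (g₂ : SimpleGraph (Fin m))
      (v : Fin n) (o₁ o₂ : Fin m ≃ W) (u : Fin m),
      {r : ℕ | ∃ w, InOrbit g₂ u w ∧ vnRank (toFun g₁ (obf o₁ g₂) v) (o₁ w) = r} =
      {r : ℕ | ∃ w, InOrbit g₂ u w ∧ vnRank (toFun g₁ (obf o₂ g₂) v) (o₂ w) = r}

/-- The level-`k` error `L_k(Φ, v*)` of the scheme `Φ` at the vertex of interest `v` (whose
corresponding vertex in the second graph is `u`), with respect to the distribution `F` on
pairs of graphs and the obfuscating function `o`. -/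
noncomputable def vnError {n m : ℕ} {W : Type*}
    (F : PMF (SimpleGraph (Fin n) × SimpleGraph (Fin m)))
    (Φ : VNScheme n m W) (o : Fin m ≃ W) (v : Fin n) (u : Fin m) (k : ℕ) : ℝ :=
  (F.toOuterMeasure {p | k + 1 ≤ vnRank (Φ.toFun p.1 (obf o p.2) v) (o u)}).toReal

/-- The level-`k` Bayes error `L*_k(v*)`: the infimum of the level-`k` errors over all
vertex nomination schemes. -/
noncomputable def bayesError (n m : ℕ) (W : Type*)
    (F : PMF (SimpleGraph (Fin n) × SimpleGraph (Fin m)))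
    (o : Fin m ≃ W) (v : Fin n) (u : Fin m) (k : ℕ) : ℝ :=
  ⨅ Φ : VNScheme n m W, vnError F Φ o v u k

end VN

namespace VNAux
open VN Finset

variable {n m : ℕ} {W : Type}

/-! ### Graph map helpers -/

lemma map_symm_cancel {α β : Type} (e : α ≃ β) (G : SimpleGraph α) :
    (SimpleGraph.map e.toEmbedding G).map e.symm.toEmbedding = G := by
  rw [SimpleGraph.map_symm]; exact SimpleGraph.comap_map_eq _ _

/-- From `map e G = H` construct an isomorphism. -/
def isoOfMapEq {α β : Type} (e : α ≃ β) {G : SimpleGraph α} {H : SimpleGraph β}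
    (h : SimpleGraph.map e.toEmbedding G = H) : G ≃g H :=
  { toEquiv := e
    map_rel_iff' := by
      subst h
      intro a b
      simp [SimpleGraph.map_adj, e.injective.eq_iff]
      exact SimpleGraph.map_adj_apply (f := e.toEmbedding) }

lemma map_eq_of_iso {α β : Type} {G : SimpleGraph α} {H : SimpleGraph β} (φ : G ≃g H) :
    SimpleGraph.map φ.toEquiv.toEmbedding G = H := by
  ext a b
  simp only [SimpleGraph.map_adj, Equiv.toEmbedding_apply]
  constructor
  · rintro ⟨x, y, hxy, rfl, rfl⟩
    exact φ.map_adj_iff.mpr hxy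
  · intro hab
    exact ⟨φ.symm a, φ.symm b, φ.symm.map_adj_iff.mpr hab, by simp, by simp⟩

lemma obf_trans_eq (o : Fin m ≃ W) (τ : W ≃ W) (g : SimpleGraph (Fin m)) :
    SimpleGraph.map τ.toEmbedding (obf o g) = obf (o.trans τ) g := by
  simp [obf, SimpleGraph.map_map, Equiv.trans_toEmbedding]

/-! ### Rank independence from consistency, for asymmetric graphs -/

lemma inOrbit_iff_of_asym {g : SimpleGraph (Fin m)} (hg : IsAsym g) (u w : Fin m) :
    InOrbit g u w ↔ w = u := by
  constructor
  · rintro ⟨σ, rfl⟩; exact hg σ u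
  · rintro rfl; exact ⟨SimpleGraph.Iso.refl, rfl⟩

lemma rank_indep (Φ : VNScheme n m W) (g₁ : SimpleGraph (Fin n)) {g₂ : SimpleGraph (Fin m)}
    (hg : IsAsym g₂) (v : Fin n) (o₁ o₂ : Fin m ≃ W) (u : Fin m) :
    vnRank (Φ.toFun g₁ (obf o₁ g₂) v) (o₁ u) = vnRank (Φ.toFun g₁ (obf o₂ g₂) v) (o₂ u) := by
  have h := Φ.consistent g₁ g₂ v o₁ o₂ u
  simp only [inOrbit_iff_of_asym hg, exists_eq_left] at h
  have := (Set.ext_iff.mp h (vnRank (Φ.toFun g₁ (obf o₁ g₂) v) (o₁ u))).mp rfl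
  exact this.symm


/-! ### Pointed isomorphism classes and a complete numeric invariant -/

/-- Pointed isomorphism of pointed graphs on `W`. -/
def PtdIso (p q : SimpleGraph W × W) : Prop :=
  ∃ e : W ≃ W, SimpleGraph.map e.toEmbedding p.1 = q.1 ∧ e p.2 = q.2

lemma PtdIso.refl (p : SimpleGraph W × W) : PtdIso p p := by
  refine ⟨Equiv.refl W, ?_, rfl⟩
  exact map_eq_of_iso (SimpleGraph.Iso.refl)

lemma PtdIso.symm {p q : SimpleGraph W × W} : PtdIso p q → PtdIso q p := by
  rintro ⟨e, h1, h2⟩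
  refine ⟨e.symm, ?_, by rw [← h2]; simp⟩
  rw [← h1, map_symm_cancel]

lemma PtdIso.trans {p q r : SimpleGraph W × W} : PtdIso p q → PtdIso q r → PtdIso p r := by
  rintro ⟨e, h1, h2⟩ ⟨f, h3, h4⟩
  refine ⟨e.trans f, ?_, by rw [Equiv.trans_apply, h2, h4]⟩
  rw [← h3, ← h1, SimpleGraph.map_map, Equiv.trans_toEmbedding]
  rfl

variable [Fintype W] [DecidableEq W]

open scoped Classical in
/-- A complete invariant of pointed isomorphism classes. -/
noncomputable def pcode (p : SimpleGraph W × W) : WithBot ℕ :=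
  (((univ : Finset (SimpleGraph W × W)).filter (fun q => PtdIso p q)).image
      (fun q => (Fintype.equivFin (SimpleGraph W × W) q : ℕ))).min

open scoped Classical in
lemma pcode_filter_nonempty (p : SimpleGraph W × W) :
    (((univ : Finset (SimpleGraph W × W)).filter (fun q => PtdIso p q)).image
      (fun q => (Fintype.equivFin (SimpleGraph W × W) q : ℕ))).Nonempty :=
  Finset.Nonempty.image ⟨p, by simp [PtdIso.refl]⟩ _

open scoped Classical in
lemma pcode_eq_of_ptdIso {p q : SimpleGraph W × W} (h : PtdIso p q) : pcode p = pcode q := by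
  have hS : ((univ : Finset (SimpleGraph W × W)).filter (fun r => PtdIso p r)) =
      ((univ : Finset (SimpleGraph W × W)).filter (fun r => PtdIso q r)) := by
    ext r
    simp only [Finset.mem_filter, Finset.mem_univ, true_and]
    exact ⟨fun hr => (h.symm).trans hr, fun hr => h.trans hr⟩
  unfold pcode
  rw [hS]

open scoped Classical in
lemma ptdIso_of_pcode_eq {p q : SimpleGraph W × W} (h : pcode p = pcode q) : PtdIso p q := by
  obtain ⟨a, ha⟩ := Finset.min_of_nonempty (pcode_filter_nonempty p)
  have hb : pcode q = (a : WithBot ℕ) := by rw [← h]; exact ha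
  obtain ⟨r, hr, hr2⟩ := Finset.mem_image.mp (Finset.mem_of_min ha)
  obtain ⟨r', hr', hr2'⟩ := Finset.mem_image.mp (Finset.mem_of_min hb)
  have : r = r' := by
    apply (Fintype.equivFin (SimpleGraph W × W)).injective
    exact Fin.val_injective (hr2.trans hr2'.symm)
  subst this
  simp only [Finset.mem_filter, Finset.mem_univ, true_and] at hr hr'
  exact hr.trans hr'.symm


/-! ### Posterior weight and its equivariance -/

open scoped Classical in
/-- Posterior weight of candidate `w` given observed `(g₁, h)`. -/
noncomputable def wt (F : PMF (SimpleGraph (Fin n) × SimpleGraph (Fin m)))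
    (g₁ : SimpleGraph (Fin n)) (h : SimpleGraph W) (u0 : Fin m) (w : W) : ℝ≥0∞ :=
  ∑ g₂ : SimpleGraph (Fin m), ∑ σ : Fin m ≃ W,
    if obf σ g₂ = h ∧ σ u0 = w then F (g₁, g₂) else 0

lemma wt_ne_top (F : PMF (SimpleGraph (Fin n) × SimpleGraph (Fin m)))
    (g₁ : SimpleGraph (Fin n)) (h : SimpleGraph W) (u0 : Fin m) (w : W) :
    wt F g₁ h u0 w ≠ ⊤ := by
  refine (ENNReal.sum_lt_top.mpr fun g₂ _ => ENNReal.sum_lt_top.mpr fun σ _ => ?_).ne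
  split_ifs
  · exact F.apply_lt_top _
  · exact ENNReal.zero_lt_top

lemma wt_map (F : PMF (SimpleGraph (Fin n) × SimpleGraph (Fin m)))
    (g₁ : SimpleGraph (Fin n)) (h : SimpleGraph W) (u0 : Fin m) (τ : W ≃ W) (w : W) :
    wt F g₁ (SimpleGraph.map τ.toEmbedding h) u0 (τ w) = wt F g₁ h u0 w := by
  classical
  unfold wt
  refine Finset.sum_congr rfl fun g₂ _ => ?_
  refine Fintype.sum_equiv ⟨fun σ => σ.trans τ.symm, fun σ => σ.trans τ,
    fun σ => by ext i; simp, fun σ => by ext i; simp⟩ _ _ fun σ => ?_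
  refine if_congr (and_congr ?_ ?_) rfl rfl
  · show obf σ g₂ = SimpleGraph.map τ.toEmbedding h ↔ obf (σ.trans τ.symm) g₂ = h
    rw [← obf_trans_eq]
    constructor
    · intro ha
      rw [ha]
      exact map_symm_cancel τ h
    · intro hh
      rw [← hh]
      have := map_symm_cancel τ.symm (obf σ g₂)
      rw [Equiv.symm_symm] at this
      exact this.symm
  · show σ u0 = τ w ↔ (σ.trans τ.symm) u0 = w
    rw [Equiv.trans_apply, Equiv.symm_apply_eq]

lemma wt_ptdIso (F : PMF (SimpleGraph (Fin n) × SimpleGraph (Fin m)))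
    (g₁ : SimpleGraph (Fin n)) (u0 : Fin m) {h h' : SimpleGraph W} {w w' : W}
    (hpi : PtdIso (h, w) (h', w')) : wt F g₁ h' u0 w' = wt F g₁ h u0 w := by
  obtain ⟨τ, h1, h2⟩ := hpi
  simp only at h1 h2
  rw [← h1, ← h2, wt_map]

/-! ### The sorting key -/

/-- The sorting key: primarily by descending posterior weight, secondarily by the
pointed-isomorphism-class invariant. -/
noncomputable def keyF (F : PMF (SimpleGraph (Fin n) × SimpleGraph (Fin m)))
    (g₁ : SimpleGraph (Fin n)) (h : SimpleGraph W) (u0 : Fin m) (w : W) :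
    ℝ≥0∞ᵒᵈ ×ₗ WithBot ℕ :=
  toLex (OrderDual.toDual (wt F g₁ h u0 w), pcode (h, w))

lemma keyF_ptdIso (F : PMF (SimpleGraph (Fin n) × SimpleGraph (Fin m)))
    (g₁ : SimpleGraph (Fin n)) (u0 : Fin m) {h h' : SimpleGraph W} {w w' : W}
    (hpi : PtdIso (h, w) (h', w')) : keyF F g₁ h' u0 w' = keyF F g₁ h u0 w := by
  unfold keyF
  rw [wt_ptdIso F g₁ u0 hpi, pcode_eq_of_ptdIso hpi.symm]

lemma keyF_fst_le {F : PMF (SimpleGraph (Fin n) × SimpleGraph (Fin m))}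
    {g₁ : SimpleGraph (Fin n)} {h : SimpleGraph W} {u0 : Fin m} {a b : W}
    (hab : keyF F g₁ h u0 a ≤ keyF F g₁ h u0 b) : wt F g₁ h u0 b ≤ wt F g₁ h u0 a := by
  unfold keyF at hab
  rcases (Prod.Lex.le_iff).mp hab with h1 | ⟨h1, -⟩
  · exact le_of_lt h1
  · exact le_of_eq (congrArg OrderDual.ofDual h1).symm

/-! ### Sorting a finite type by a key -/

lemma exists_sortT (e₀ : Fin m ≃ W) {K : Type*} [LinearOrder K] (κ : W → K) :
    ∃ T : W ≃ Fin m, ∀ w w', κ w < κ w' → T w < T w' := by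
  have hcard : Fintype.card W = m := by
    rw [← Fintype.card_fin m]; exact Fintype.card_congr e₀.symm
  have hinj : Function.Injective (fun w => toLex (κ w, e₀.symm w)) := by
    intro a b hab
    have := congrArg (fun x => (ofLex x).2) hab
    simpa using e₀.symm.injective this
  letI : LinearOrder W := LinearOrder.lift' (fun w => toLex (κ w, e₀.symm w)) hinj
  refine ⟨(monoEquivOfFin W hcard).symm.toEquiv, fun w w' hk => ?_⟩
  have hlt : w < w' := by
    show (fun w => toLex (κ w, e₀.symm w)) w < (fun w => toLex (κ w, e₀.symm w)) w'
    exact (Prod.Lex.lt_iff).mpr (Or.inl hk)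
  exact (monoEquivOfFin W hcard).symm.lt_iff_lt.mpr hlt

/-- A total order on `W` sorted (ascending) according to the key `κ`. -/
noncomputable def sortT (e₀ : Fin m ≃ W) {K : Type*} [LinearOrder K] (κ : W → K) :
    W ≃ Fin m :=
  (exists_sortT e₀ κ).choose

lemma sortT_lt (e₀ : Fin m ≃ W) {K : Type*} [LinearOrder K] (κ : W → K) {w w' : W}
    (h : κ w < κ w') : sortT e₀ κ w < sortT e₀ κ w' :=
  (exists_sortT e₀ κ).choose_spec w w' h

lemma sortT_key_le (e₀ : Fin m ≃ W) {K : Type*} [LinearOrder K] (κ : W → K) {w w' : W}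
    (h : sortT e₀ κ w < sortT e₀ κ w') : κ w ≤ κ w' :=
  le_of_not_gt fun hlt => absurd (sortT_lt e₀ κ hlt) (lt_asymm h)


/-! ### Cardinality helpers -/

lemma card_filter_val_lt (k : ℕ) (hk : k ≤ m) :
    ((univ : Finset (Fin m)).filter fun (i : Fin m) => (i : ℕ) < k).card = k := by
  have h1 : ∀ x ∈ Finset.range k, x < m := fun x hx =>
    lt_of_lt_of_le (Finset.mem_range.mp hx) hk
  have : ((univ : Finset (Fin m)).filter fun (i : Fin m) => (i : ℕ) < k) =
      (Finset.range k).attachFin h1 := by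
    ext i
    simp [Finset.mem_attachFin, Finset.mem_range]
  rw [this, Finset.card_attachFin, Finset.card_range]

lemma card_filter_lt_fin (j : Fin m) :
    ((univ : Finset (Fin m)).filter fun (i : Fin m) => i < j).card = (j : ℕ) := by
  have : ((univ : Finset (Fin m)).filter fun (i : Fin m) => i < j) =
      ((univ : Finset (Fin m)).filter fun (i : Fin m) => (i : ℕ) < (j : ℕ)) := by
    ext i; simp only [Finset.mem_filter, Fin.lt_def]
  rw [this, card_filter_val_lt _ (le_of_lt j.isLt)]

lemma card_filter_le_fin (j : Fin m) :
    ((univ : Finset (Fin m)).filter fun (i : Fin m) => i ≤ j).card = (j : ℕ) + 1 := by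
  have : ((univ : Finset (Fin m)).filter fun (i : Fin m) => i ≤ j) =
      ((univ : Finset (Fin m)).filter fun (i : Fin m) => (i : ℕ) < (j : ℕ) + 1) := by
    ext i; simp only [Finset.mem_filter, Fin.le_def, Nat.lt_succ_iff]
  rw [this, card_filter_val_lt _ j.isLt]

/-! ### The block of ranks of a key fiber -/

lemma rank_image_block {K : Type*} [LinearOrder K] (T : W ≃ Fin m) (κ : W → K)
    (hT : ∀ w w', κ w < κ w' → T w < T w') (c : K) :
    {r : ℕ | ∃ w, κ w = c ∧ vnRank T w = r} =
      {r : ℕ | ((univ : Finset W).filter fun w => κ w < c).card + 1 ≤ r ∧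
        r ≤ ((univ : Finset W).filter fun w => κ w < c).card +
          ((univ : Finset W).filter fun w => κ w = c).card} := by
  classical
  set A := (univ : Finset W).filter fun w => κ w = c with hA
  set cnt := ((univ : Finset W).filter fun w => κ w < c).card with hcnt
  have hrank_inj : Function.Injective (vnRank T) := by
    intro a b hab
    exact T.injective (Fin.val_injective (Nat.succ_injective hab))
  have himage : A.image (vnRank T) = Finset.Icc (cnt + 1) (cnt + A.card) := by
    apply Finset.eq_of_subset_of_card_le
    · intro r hr
      obtain ⟨w, hw, rfl⟩ := Finset.mem_image.mp hr
      have hwc : κ w = c := (Finset.mem_filter.mp hw).2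
      rw [Finset.mem_Icc]
      constructor
      · -- cnt + 1 ≤ (T w).val + 1
        have hsub : ((univ : Finset W).filter fun w' => κ w' < c) ⊆
            ((univ : Finset W).filter fun w' => T w' < T w) := by
          intro w' hw'
          simp only [Finset.mem_filter, Finset.mem_univ, true_and] at hw' ⊢
          exact hT w' w (hwc ▸ hw')
        have h1 : cnt ≤ ((univ : Finset W).filter fun w' => T w' < T w).card :=
          Finset.card_le_card hsub
        have h2 : ((univ : Finset W).filter fun w' => T w' < T w).card = ((T w) : ℕ) := by
          rw [Finset.card_equiv T (fun w' => ?_), card_filter_lt_fin (T w)]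
          simp
        have : cnt ≤ ((T w) : ℕ) := h2 ▸ h1
        exact Nat.add_le_add_right this 1
      · -- (T w).val + 1 ≤ cnt + A.card
        have hsub : ((univ : Finset W).filter fun w' => T w' ≤ T w) ⊆
            ((univ : Finset W).filter fun w' => κ w' < c) ∪ A := by
          intro w' hw'
          simp only [Finset.mem_filter, Finset.mem_univ, true_and] at hw'
          rcases lt_trichotomy (κ w') c with h | h | h
          · exact Finset.mem_union_left _ (by simp [h])
          · exact Finset.mem_union_right _ (by simp [hA, h])
          · exfalso
            exact absurd (hT w w' (hwc ▸ h)) (not_lt.mpr hw')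
        have h2 : ((univ : Finset W).filter fun w' => T w' ≤ T w).card = ((T w) : ℕ) + 1 := by
          rw [Finset.card_equiv T (fun w' => ?_), card_filter_le_fin (T w)]
          simp
        calc ((T w) : ℕ) + 1 = ((univ : Finset W).filter fun w' => T w' ≤ T w).card := h2.symm
          _ ≤ (((univ : Finset W).filter fun w' => κ w' < c) ∪ A).card :=
              Finset.card_le_card hsub
          _ ≤ cnt + A.card := Finset.card_union_le _ _
    · rw [Nat.card_Icc, Finset.card_image_of_injective _ hrank_inj]
      simp
  have : {r : ℕ | ∃ w, κ w = c ∧ vnRank T w = r} = ↑(A.image (vnRank T)) := by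
    ext r
    simp [hA, Finset.mem_image, Finset.mem_filter]
  rw [this, himage]
  ext r
  simp [Finset.mem_Icc]


/-! ### The orbit of `u` is exactly a key fiber -/

lemma orbit_fiber (F : PMF (SimpleGraph (Fin n) × SimpleGraph (Fin m)))
    (g₁ : SimpleGraph (Fin n)) (u0 : Fin m) (o₁ : Fin m ≃ W) (g₂ : SimpleGraph (Fin m))
    (u : Fin m) (x : W) :
    (∃ w, InOrbit g₂ u w ∧ o₁ w = x) ↔
      keyF F g₁ (obf o₁ g₂) u0 x = keyF F g₁ (obf o₁ g₂) u0 (o₁ u) := by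
  constructor
  · rintro ⟨w, ⟨α, hα⟩, rfl⟩
    set e : W ≃ W := (o₁.symm.trans α.toEquiv).trans o₁ with he
    have h1 : SimpleGraph.map e.toEmbedding (obf o₁ g₂) = obf o₁ g₂ := by
      show SimpleGraph.map e.toEmbedding (SimpleGraph.map o₁.toEmbedding g₂) =
        SimpleGraph.map o₁.toEmbedding g₂
      rw [SimpleGraph.map_map]
      have h2 : o₁.trans e = α.toEquiv.trans o₁ := by
        ext i; simp [he]
      rw [show (⇑e.toEmbedding ∘ ⇑o₁.toEmbedding) = (⇑o₁.toEmbedding ∘ ⇑α.toEquiv.toEmbedding)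
        from congrArg DFunLike.coe h2, ← SimpleGraph.map_map, map_eq_of_iso α]
    have h3 : e (o₁ u) = o₁ w := by simp [he, hα]
    exact keyF_ptdIso F g₁ u0 ⟨e, h1, h3⟩
  · intro hk
    have hpc : pcode (obf o₁ g₂, x) = pcode (obf o₁ g₂, o₁ u) := by
      have := congrArg (fun z => (ofLex z).2) hk
      simpa [keyF] using this
    obtain ⟨e, he1, he2⟩ := (ptdIso_of_pcode_eq hpc).symm
    simp only at he1 he2
    have hα : SimpleGraph.map ((o₁.trans e).trans o₁.symm).toEmbedding g₂ = g₂ := by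
      rw [show ⇑((o₁.trans e).trans o₁.symm).toEmbedding =
        ⇑o₁.symm.toEmbedding ∘ ⇑e.toEmbedding ∘ ⇑o₁.toEmbedding from rfl,
        ← SimpleGraph.map_map, ← SimpleGraph.map_map]
      rw [show SimpleGraph.map o₁.toEmbedding g₂ = obf o₁ g₂ from rfl, he1]
      exact map_symm_cancel o₁ g₂
    refine ⟨o₁.symm x, ⟨isoOfMapEq _ hα, ?_⟩, by simp⟩
    show ((o₁.trans e).trans o₁.symm) u = o₁.symm x
    simp [he2]

/-! ### The optimal scheme -/

/-- Target vertex in `Fin m` corresponding to the vertex of interest. -/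
def tgt (hm : 0 < m) (v : Fin n) : Fin m :=
  if hv : (v : ℕ) < m then ⟨v, hv⟩ else ⟨0, hm⟩

lemma psi_consistent (e₀ : Fin m ≃ W) (F : PMF (SimpleGraph (Fin n) × SimpleGraph (Fin m)))
    (u0 : Fin m) (g₁ : SimpleGraph (Fin n)) (g₂ : SimpleGraph (Fin m))
    (o₁ o₂ : Fin m ≃ W) (u : Fin m) :
    {r : ℕ | ∃ w, InOrbit g₂ u w ∧
        vnRank (sortT e₀ (keyF F g₁ (obf o₁ g₂) u0)) (o₁ w) = r} =
      {r : ℕ | ∃ w, InOrbit g₂ u w ∧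
        vnRank (sortT e₀ (keyF F g₁ (obf o₂ g₂) u0)) (o₂ w) = r} := by
  classical
  have orb : ∀ (o : Fin m ≃ W),
      {r : ℕ | ∃ w, InOrbit g₂ u w ∧
        vnRank (sortT e₀ (keyF F g₁ (obf o g₂) u0)) (o w) = r} =
      {r : ℕ | ∃ x, keyF F g₁ (obf o g₂) u0 x = keyF F g₁ (obf o g₂) u0 (o u) ∧
        vnRank (sortT e₀ (keyF F g₁ (obf o g₂) u0)) x = r} := by
    intro o
    ext r
    constructor
    · rintro ⟨w, hw, hr⟩
      exact ⟨o w, (orbit_fiber F g₁ u0 o g₂ u (o w)).mp ⟨w, hw, rfl⟩, hr⟩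
    · rintro ⟨x, hx, hr⟩
      obtain ⟨w, hw, rfl⟩ := (orbit_fiber F g₁ u0 o g₂ u x).mpr hx
      exact ⟨w, hw, hr⟩
  rw [orb o₁, orb o₂,
    rank_image_block _ _ (fun w w' h => sortT_lt e₀ _ h) _,
    rank_image_block _ _ (fun w w' h => sortT_lt e₀ _ h) _]
  set κ₁ := keyF F g₁ (obf o₁ g₂) u0
  set κ₂ := keyF F g₁ (obf o₂ g₂) u0
  set τ : W ≃ W := o₁.symm.trans o₂ with hτ
  have hmap : SimpleGraph.map τ.toEmbedding (obf o₁ g₂) = obf o₂ g₂ := by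
    rw [obf_trans_eq]
    congr 1
    ext i; simp [hτ]
  have hkey : ∀ x, κ₂ (τ x) = κ₁ x := fun x => keyF_ptdIso F g₁ u0 ⟨τ, hmap, rfl⟩
  have hc : κ₂ (o₂ u) = κ₁ (o₁ u) := by
    have : o₂ u = τ (o₁ u) := by simp [hτ]
    rw [this, hkey]
  have hcnt : ((univ : Finset W).filter fun w => κ₁ w < κ₁ (o₁ u)).card =
      ((univ : Finset W).filter fun w => κ₂ w < κ₂ (o₂ u)).card := by
    rw [hc]
    exact Finset.card_equiv τ fun x => by
      simp only [Finset.mem_filter, Finset.mem_univ, true_and, hkey x]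
  have hfib : ((univ : Finset W).filter fun w => κ₁ w = κ₁ (o₁ u)).card =
      ((univ : Finset W).filter fun w => κ₂ w = κ₂ (o₂ u)).card := by
    rw [hc]
    exact Finset.card_equiv τ fun x => by
      simp only [Finset.mem_filter, Finset.mem_univ, true_and, hkey x]
  rw [hcnt, hfib]

/-- The simultaneously Bayes-optimal vertex nomination scheme. -/
noncomputable def psi (e₀ : Fin m ≃ W) (F : PMF (SimpleGraph (Fin n) × SimpleGraph (Fin m)))
    (hm : 0 < m) : VNScheme n m W where
  toFun g₁ h v := sortT e₀ (keyF F g₁ h (tgt hm v))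
  consistent g₁ g₂ v o₁ o₂ u := psi_consistent e₀ F (tgt hm v) g₁ g₂ o₁ o₂ u


/-! ### Error as a finite sum -/

open scoped Classical in
noncomputable def EE (F : PMF (SimpleGraph (Fin n) × SimpleGraph (Fin m)))
    (Φ : VNScheme n m W) (o : Fin m ≃ W) (v : Fin n) (u0 : Fin m) (k : ℕ) : ℝ≥0∞ :=
  ∑ p : SimpleGraph (Fin n) × SimpleGraph (Fin m),
    if k + 1 ≤ vnRank (Φ.toFun p.1 (obf o p.2) v) (o u0) then F p else 0

lemma vnError_eq (F : PMF (SimpleGraph (Fin n) × SimpleGraph (Fin m)))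
    (Φ : VNScheme n m W) (o : Fin m ≃ W) (v : Fin n) (u0 : Fin m) (k : ℕ) :
    vnError F Φ o v u0 k = (EE F Φ o v u0 k).toReal := by
  classical
  unfold vnError EE
  congr 1
  rw [PMF.toOuterMeasure_apply_fintype]
  refine Finset.sum_congr rfl fun p _ => ?_
  rw [Set.indicator_apply]
  simp only [Set.mem_setOf_eq]

lemma EE_ne_top (F : PMF (SimpleGraph (Fin n) × SimpleGraph (Fin m)))
    (Φ : VNScheme n m W) (o : Fin m ≃ W) (v : Fin n) (u0 : Fin m) (k : ℕ) :
    EE F Φ o v u0 k ≠ ⊤ := by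
  refine (ENNReal.sum_lt_top.mpr fun p _ => ?_).ne
  split_ifs
  · exact F.apply_lt_top _
  · exact ENNReal.zero_lt_top

lemma EE_indep (F : PMF (SimpleGraph (Fin n) × SimpleGraph (Fin m)))
    (hF : ∀ p ∈ F.support, IsAsym p.1 ∧ IsAsym p.2)
    (Φ : VNScheme n m W) (σ o : Fin m ≃ W) (v : Fin n) (u0 : Fin m) (k : ℕ) :
    EE F Φ σ v u0 k = EE F Φ o v u0 k := by
  classical
  unfold EE
  refine Finset.sum_congr rfl fun p _ => ?_
  by_cases hp : F p = 0
  · split_ifs <;> simp [hp]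
  · have hasym : IsAsym p.2 := (hF p (PMF.mem_support_iff F p |>.mpr hp)).2
    rw [rank_indep Φ p.1 hasym v σ o u0]

open scoped Classical in
/-- Expected mass ranked below level `k` for ordering `T` of the observation `(g₁, h)`. -/
noncomputable def SS (F : PMF (SimpleGraph (Fin n) × SimpleGraph (Fin m)))
    (T : W ≃ Fin m) (g₁ : SimpleGraph (Fin n)) (h : SimpleGraph W) (u0 : Fin m) (k : ℕ) :
    ℝ≥0∞ :=
  ∑ w : W, if k + 1 ≤ vnRank T w then wt F g₁ h u0 w else 0

lemma sum_swap4 {M A B C D : Type*} [AddCommMonoid M]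
    [Fintype A] [Fintype B] [Fintype C] [Fintype D] (f : A → B → C → D → M) :
    ∑ a, ∑ b, ∑ c, ∑ d, f a b c d = ∑ c, ∑ d, ∑ a, ∑ b, f a b c d :=
  calc ∑ a, ∑ b, ∑ c, ∑ d, f a b c d
      = ∑ a, ∑ c, ∑ b, ∑ d, f a b c d :=
        Finset.sum_congr rfl fun a _ => Finset.sum_comm
    _ = ∑ c, ∑ a, ∑ b, ∑ d, f a b c d := Finset.sum_comm
    _ = ∑ c, ∑ a, ∑ d, ∑ b, f a b c d :=
        Finset.sum_congr rfl fun c _ => Finset.sum_congr rfl fun a _ => Finset.sum_comm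
    _ = ∑ c, ∑ d, ∑ a, ∑ b, f a b c d :=
        Finset.sum_congr rfl fun c _ => Finset.sum_comm

lemma sum_EE (F : PMF (SimpleGraph (Fin n) × SimpleGraph (Fin m)))
    (Φ : VNScheme n m W) (v : Fin n) (u0 : Fin m) (k : ℕ) :
    ∑ σ : Fin m ≃ W, EE F Φ σ v u0 k =
      ∑ g₁ : SimpleGraph (Fin n), ∑ h : SimpleGraph W,
        SS F (Φ.toFun g₁ h v) g₁ h u0 k := by
  classical
  have hrhs : ∀ (g₁ : SimpleGraph (Fin n)),
      (∑ h : SimpleGraph W, SS F (Φ.toFun g₁ h v) g₁ h u0 k) =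
      ∑ g₂ : SimpleGraph (Fin m), ∑ σ : Fin m ≃ W,
        (if k + 1 ≤ vnRank (Φ.toFun g₁ (obf σ g₂) v) (σ u0) then F (g₁, g₂) else 0) := by
    intro g₁
    unfold SS wt
    have step1 : ∀ (h : SimpleGraph W) (w : W),
        (if k + 1 ≤ vnRank (Φ.toFun g₁ h v) w then
          (∑ g₂ : SimpleGraph (Fin m), ∑ σ : Fin m ≃ W,
            if obf σ g₂ = h ∧ σ u0 = w then F (g₁, g₂) else 0) else 0) =
        ∑ g₂ : SimpleGraph (Fin m), ∑ σ : Fin m ≃ W,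
          (if obf σ g₂ = h ∧ σ u0 = w ∧ k + 1 ≤ vnRank (Φ.toFun g₁ h v) w
            then F (g₁, g₂) else 0) := by
      intro h w
      by_cases hc : k + 1 ≤ vnRank (Φ.toFun g₁ h v) w
      · simp only [hc, if_true, and_true]
      · simp [hc]
    calc (∑ h : SimpleGraph W, ∑ w : W,
            if k + 1 ≤ vnRank (Φ.toFun g₁ h v) w then
              (∑ g₂ : SimpleGraph (Fin m), ∑ σ : Fin m ≃ W,
                if obf σ g₂ = h ∧ σ u0 = w then F (g₁, g₂) else 0) else 0)
        = ∑ h : SimpleGraph W, ∑ w : W, ∑ g₂ : SimpleGraph (Fin m), ∑ σ : Fin m ≃ W,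
            (if obf σ g₂ = h ∧ σ u0 = w ∧ k + 1 ≤ vnRank (Φ.toFun g₁ h v) w
              then F (g₁, g₂) else 0) :=
          Finset.sum_congr rfl fun h _ => Finset.sum_congr rfl fun w _ => step1 h w
      _ = ∑ g₂ : SimpleGraph (Fin m), ∑ σ : Fin m ≃ W, ∑ h : SimpleGraph W, ∑ w : W,
            (if obf σ g₂ = h ∧ σ u0 = w ∧ k + 1 ≤ vnRank (Φ.toFun g₁ h v) w
              then F (g₁, g₂) else 0) :=
          sum_swap4 _
      _ = ∑ g₂ : SimpleGraph (Fin m), ∑ σ : Fin m ≃ W,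
            (if k + 1 ≤ vnRank (Φ.toFun g₁ (obf σ g₂) v) (σ u0) then F (g₁, g₂) else 0) := by
          refine Finset.sum_congr rfl fun g₂ _ => Finset.sum_congr rfl fun σ _ => ?_
          simp only [ite_and, Finset.sum_ite_irrel, Finset.sum_const_zero,
            Finset.sum_ite_eq, Finset.mem_univ, if_true]
  have hlhs : ∑ σ : Fin m ≃ W, EE F Φ σ v u0 k =
      ∑ g₁ : SimpleGraph (Fin n), ∑ g₂ : SimpleGraph (Fin m), ∑ σ : Fin m ≃ W,
        (if k + 1 ≤ vnRank (Φ.toFun g₁ (obf σ g₂) v) (σ u0) then F (g₁, g₂) else 0) := by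
    unfold EE
    rw [Finset.sum_comm, Fintype.sum_prod_type]
  rw [hlhs]
  exact Finset.sum_congr rfl fun g₁ _ => (hrhs g₁).symm


/-! ### Exchange argument: sorted order maximizes top-k mass -/

lemma exchange (A B : Finset W) (f : W → ℝ≥0∞) (hcard : A.card = B.card)
    (h : ∀ a ∈ A \ B, ∀ b ∈ B \ A, f a ≤ f b) : ∑ x ∈ A, f x ≤ ∑ x ∈ B, f x := by
  classical
  rw [← Finset.sum_inter_add_sum_sdiff A B f, ← Finset.sum_inter_add_sum_sdiff B A f,
    Finset.inter_comm B A]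
  refine add_le_add le_rfl ?_
  have hdcard : (A \ B).card = (B \ A).card := by
    have h1 := Finset.card_inter_add_card_sdiff A B
    have h2 := Finset.card_inter_add_card_sdiff B A
    rw [Finset.inter_comm B A] at h2
    omega
  rcases Finset.eq_empty_or_nonempty (A \ B) with he | hne
  · simp [he]
  · have hBA : (B \ A).Nonempty := by
      rw [← Finset.card_pos, ← hdcard, Finset.card_pos]
      exact hne
    obtain ⟨b0, hb0, hmin⟩ := Finset.exists_min_image (B \ A) f hBA
    calc ∑ x ∈ A \ B, f x ≤ ∑ _x ∈ A \ B, f b0 :=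
          Finset.sum_le_sum fun a ha => h a ha b0 hb0
      _ = (A \ B).card • f b0 := Finset.sum_const _
      _ = (B \ A).card • f b0 := by rw [hdcard]
      _ = ∑ _x ∈ B \ A, f b0 := (Finset.sum_const _).symm
      _ ≤ ∑ x ∈ B \ A, f x := Finset.sum_le_sum fun b hb => hmin b hb

open scoped Classical in
lemma card_rank_le (T : W ≃ Fin m) (k : ℕ) (hk : k ≤ m) :
    ((univ : Finset W).filter fun w => ¬ (k + 1 ≤ vnRank T w)).card = k := by
  classical
  have heq : ((univ : Finset W).filter fun w => ¬ (k + 1 ≤ vnRank T w)) =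
      ((univ : Finset W).filter fun w => ((T w : ℕ)) < k) := by
    ext w
    simp only [Finset.mem_filter, Finset.mem_univ, true_and, vnRank, not_le]
    omega
  rw [heq]
  have hce := Finset.card_equiv (s := (univ : Finset W).filter fun w => ((T w : ℕ)) < k)
    (t := (univ : Finset (Fin m)).filter fun (i : Fin m) => (i : ℕ) < k) T
    (fun w => by simp)
  rw [hce, card_filter_val_lt k hk]

lemma SS_opt (e₀ : Fin m ≃ W) (F : PMF (SimpleGraph (Fin n) × SimpleGraph (Fin m)))
    (g₁ : SimpleGraph (Fin n)) (h : SimpleGraph W) (u0 : Fin m) (k : ℕ) (hk : k ≤ m)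
    (T : W ≃ Fin m) :
    SS F (sortT e₀ (keyF F g₁ h u0)) g₁ h u0 k ≤ SS F T g₁ h u0 k := by
  classical
  set κ := keyF F g₁ h u0 with hκ
  set T₀ := sortT e₀ κ with hT₀
  set f : W → ℝ≥0∞ := wt F g₁ h u0 with hf
  have keyfact : ∀ (S : W ≃ Fin m), SS F S g₁ h u0 k +
      ∑ x ∈ ((univ : Finset W).filter fun w => ¬ (k + 1 ≤ vnRank S w)), f x =
        ∑ w : W, f w := by
    intro S
    unfold SS
    rw [Finset.sum_filter, ← Finset.sum_add_distrib]
    refine Finset.sum_congr rfl fun w _ => ?_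
    by_cases hc : k + 1 ≤ vnRank S w <;> simp [hc, hf]
  have hle : ∑ x ∈ ((univ : Finset W).filter fun w => ¬ (k + 1 ≤ vnRank T w)), f x ≤
      ∑ x ∈ ((univ : Finset W).filter fun w => ¬ (k + 1 ≤ vnRank T₀ w)), f x := by
    refine exchange _ _ f (by rw [card_rank_le T k hk, card_rank_le T₀ k hk]) ?_
    intro a ha b hb
    simp only [Finset.mem_sdiff, Finset.mem_filter, Finset.mem_univ, true_and,
      not_le, not_lt, not_not] at ha hb
    have hlt : T₀ b < T₀ a := by
      have h1 : vnRank T₀ b < vnRank T₀ a := lt_of_lt_of_le hb.1 ha.2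
      simp only [vnRank] at h1
      exact Fin.lt_def.mpr (by omega)
    have hkey : κ b ≤ κ a := sortT_key_le e₀ κ hlt
    exact keyF_fst_le hkey
  have h1 := keyfact T₀
  have h2 := keyfact T
  have hfin : (∑ x ∈ ((univ : Finset W).filter fun w => ¬ (k + 1 ≤ vnRank T₀ w)), f x) ≠ ⊤ := by
    refine (ENNReal.sum_lt_top.mpr fun x _ => ?_).ne
    exact lt_of_le_of_ne le_top (wt_ne_top F g₁ h u0 x)
  refine (ENNReal.add_le_add_iff_right hfin).mp ?_
  calc SS F T₀ g₁ h u0 k +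
        ∑ x ∈ ((univ : Finset W).filter fun w => ¬ (k + 1 ≤ vnRank T₀ w)), f x
      = ∑ w : W, f w := h1
    _ = SS F T g₁ h u0 k +
        ∑ x ∈ ((univ : Finset W).filter fun w => ¬ (k + 1 ≤ vnRank T w)), f x := h2.symm
    _ ≤ SS F T g₁ h u0 k +
        ∑ x ∈ ((univ : Finset W).filter fun w => ¬ (k + 1 ≤ vnRank T₀ w)), f x :=
        add_le_add le_rfl hle

lemma EE_le (e₀ : Fin m ≃ W) (F : PMF (SimpleGraph (Fin n) × SimpleGraph (Fin m)))
    (hF : ∀ p ∈ F.support, IsAsym p.1 ∧ IsAsym p.2) (hm : 0 < m) (o : Fin m ≃ W)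
    (v : Fin n) (k : ℕ) (hk : k ≤ m) (Φ : VNScheme n m W) :
    EE F (psi e₀ F hm) o v (tgt hm v) k ≤ EE F Φ o v (tgt hm v) k := by
  classical
  have hcard : ∀ Θ : VNScheme n m W,
      (Fintype.card (Fin m ≃ W) : ℝ≥0∞) * EE F Θ o v (tgt hm v) k =
        ∑ g₁ : SimpleGraph (Fin n), ∑ h : SimpleGraph W,
          SS F (Θ.toFun g₁ h v) g₁ h (tgt hm v) k := by
    intro Θ
    rw [← sum_EE F Θ v (tgt hm v) k,
      Finset.sum_congr rfl fun σ _ => EE_indep F hF Θ σ o v (tgt hm v) k,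
      Finset.sum_const, nsmul_eq_mul, Finset.card_univ]
  have hmain : ∑ g₁ : SimpleGraph (Fin n), ∑ h : SimpleGraph W,
      SS F ((psi e₀ F hm).toFun g₁ h v) g₁ h (tgt hm v) k ≤
      ∑ g₁ : SimpleGraph (Fin n), ∑ h : SimpleGraph W,
      SS F (Φ.toFun g₁ h v) g₁ h (tgt hm v) k :=
    Finset.sum_le_sum fun g₁ _ => Finset.sum_le_sum fun h _ =>
      SS_opt e₀ F g₁ h (tgt hm v) k hk (Φ.toFun g₁ h v)
  have hc0 : (Fintype.card (Fin m ≃ W) : ℝ≥0∞) ≠ 0 := by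
    haveI : Nonempty (Fin m ≃ W) := ⟨e₀⟩
    exact Nat.cast_ne_zero.mpr Fintype.card_ne_zero
  have hct : (Fintype.card (Fin m ≃ W) : ℝ≥0∞) ≠ ⊤ := ENNReal.natCast_ne_top _
  exact (ENNReal.mul_le_mul_iff_right hc0 hct).mp (by rw [hcard, hcard]; exact hmain)

end VNAux

/-- For any `n, m ≥ 1`, obfuscating set `W`, distribution `F` on pairs of graphs
with core `C = {v₁,…,v_c}` supported on pairs of asymmetric graphs, and vertex of interest
`v* ∈ C`, there is a vertex nomination scheme `Ψ` that is level-`k` Bayes optimal simultaneously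
for every obfuscating function `𝔬`, every level `k ∈ {1,…,m−1}`, and every competing scheme. -/
theorem bayes_optimal_scheme_exists
    {n m c : ℕ} (hn : 1 ≤ n) (hm : 1 ≤ m) (hcn : c ≤ n) (hcm : c ≤ m)
    {W : Type} (hW : Nonempty (Fin m ≃ W))
    (F : PMF (SimpleGraph (Fin n) × SimpleGraph (Fin m)))
    (hF : ∀ p ∈ F.support, VN.IsAsym p.1 ∧ VN.IsAsym p.2)
    (v : Fin n) (hv : (v : ℕ) < c) :
    ∃ Ψ : VN.VNScheme n m W,
      ∀ (o : Fin m ≃ W) (k : ℕ), 1 ≤ k → k ≤ m - 1 →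
        ∀ Φ : VN.VNScheme n m W,
          VN.vnError F Ψ o v ⟨(v : ℕ), lt_of_lt_of_le hv hcm⟩ k ≤
            VN.vnError F Φ o v ⟨(v : ℕ), lt_of_lt_of_le hv hcm⟩ k := by
  classical
  obtain ⟨e₀⟩ := hW
  haveI : Fintype W := Fintype.ofEquiv (Fin m) e₀
  haveI : DecidableEq W := Equiv.decidableEq e₀.symm
  have hm0 : 0 < m := hm
  refine ⟨VNAux.psi e₀ F hm0, ?_⟩
  intro o k hk1 hkm Φ
  have hu0 : VNAux.tgt hm0 v = ⟨(v : ℕ), lt_of_lt_of_le hv hcm⟩ := by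
    unfold VNAux.tgt
    rw [dif_pos (lt_of_lt_of_le hv hcm)]
  rw [VNAux.vnError_eq, VNAux.vnError_eq]
  refine ENNReal.toReal_mono (VNAux.EE_ne_top F Φ o v _ k) ?_
  rw [← hu0]
  exact VNAux.EE_le e₀ F hF hm0 o v k (le_trans hkm (Nat.sub_le m 1)) Φ
end

section
/- Fix integers n, m ≥ 1, an obfuscating set W, an obfuscating function 𝔬, a probability distribution F on pairs (G₁,G₂) of graphs on V₁ and V₂ with core vertices C that is supported on pairs of asymmetric graphs, and a vertex of interest v* ∈ C. Then there exists a vertex nomination scheme Ψ such that for every vertex nomination scheme Φ, every h ∈ {1,…,m}, and every pair (g₁,g₂) such that the event {G₁ = g₁ and G₂ isomorphic to g₂} has positive probability, P( rank_{Ψ(G₁,𝔬(G₂),v*)}(𝔬(v*)) ≤ h | G₁ = g₁, G₂ ≅ g₂ ) ≥ P( rank_{Φ(G₁,𝔬(G₂),v*)}(𝔬(v*)) ≤ h | G₁ = g₁, G₂ ≅ g₂ ); that is, conditionally on each isomorphism class, the rank distribution of the true vertex under Ψ majorizes that under any other scheme. -/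
open Filter MeasureTheory
open scoped ENNReal

namespace VN

/-- The conditional probability `P(A ∣ E)` under a PMF `F`, as a ratio in `ℝ≥0∞`. -/
noncomputable def condProb {α : Type*} (F : PMF α) (A E : Set α) : ℝ≥0∞ :=
  F.toOuterMeasure (A ∩ E) / F.toOuterMeasure E

/-- The event `{G₁ = g₁ and G₂ isomorphic to g₂}`. -/
def isoEvent {n m : ℕ} (g₁ : SimpleGraph (Fin n)) (g₂ : SimpleGraph (Fin m)) :
    Set (SimpleGraph (Fin n) × SimpleGraph (Fin m)) :=
  {p | p.1 = g₁ ∧ Nonempty (SimpleGraph.Iso p.2 g₂)}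

end VN

/-!
On asymmetric graphs every automorphism orbit is a single vertex, so the consistency property
forces every scheme to be equivariant: relabelling `G₂` along an isomorphism moves the ranks
along with it. Hence, on the event `{G₁ = g₁, G₂ ≅ g₂}`, the probability that the true vertex
gets rank `≤ h` is the sum, over the at most `h` vertices `j` that the scheme ranks `≤ h` on
`(g₁, g₂)`, of the probability that `G₁ = g₁` and the rooted graph `(G₂, u)` is isomorphic to
`(g₂, j)`. Ranking the vertices by decreasing probability of their rooted isomorphism class
maximises this sum for every `h`; breaking ties by a fixed order on the classes keeps that
ranking consistent on all graphs, asymmetric or not.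
-/

open Finset

theorem Finset.sum_le_sum_of_card_le_of_forall_le {ι M : Type*} [DecidableEq ι]
    [AddCommMonoid M] [LinearOrder M] [IsOrderedAddMonoid M] [CanonicallyOrderedAdd M]
    (f : ι → M) {s t : Finset ι} (hcard : #s ≤ #t) (htop : ∀ i ∉ t, ∀ j ∈ t, f i ≤ f j) :
    ∑ i ∈ s, f i ≤ ∑ j ∈ t, f j := by
  rw [← sum_inter_add_sum_sdiff s t, ← sum_inter_add_sum_sdiff t s, inter_comm t s]
  gcongr ∑ i ∈ s ∩ t, f i + ?_
  obtain hts | ⟨j₀, hj₀⟩ := (t \ s).eq_empty_or_nonempty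
  · have : s \ t = ∅ := card_eq_zero.mp <| by
      simpa [hts] using card_sdiff_le_card_sdiff_iff.mpr hcard
    simp [this]
  set c := (t \ s).inf' ⟨j₀, hj₀⟩ f
  calc ∑ i ∈ s \ t, f i ≤ #(s \ t) • c :=
        sum_le_card_nsmul _ _ _ fun i hi => le_inf' _ _ fun j hj =>
          htop i (mem_sdiff.mp hi).2 j (mem_sdiff.mp hj).1
    _ ≤ #(t \ s) • c := nsmul_le_nsmul_left zero_le (card_sdiff_le_card_sdiff_iff.mpr hcard)
    _ ≤ ∑ j ∈ t \ s, f j := card_nsmul_le_sum _ _ _ fun j hj => inf'_le _ hj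

theorem Tuple.le_of_sort_symm_le {n : ℕ} {α : Type*} [LinearOrder α] (f : Fin n → α)
    {i j : Fin n} (h : (Tuple.sort f).symm i ≤ (Tuple.sort f).symm j) : f i ≤ f j := by
  simpa using Tuple.monotone_sort f h

theorem PMF.toOuterMeasure_biUnion_finset {α ι : Type*} (F : PMF α) {s : Finset ι}
    {E : ι → Set α} (hE : (s : Set ι).PairwiseDisjoint E) :
    F.toOuterMeasure (⋃ i ∈ s, E i) = ∑ i ∈ s, F.toOuterMeasure (E i) := by
  let : MeasurableSpace α := ⊤
  simp only [← F.toMeasure_apply_eq_toOuterMeasure_apply (MeasurableSpace.measurableSet_top)]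
  exact measure_biUnion_finset hE fun _ _ => MeasurableSpace.measurableSet_top

theorem SimpleGraph.Iso.map_eq {V V' : Type*} {G : SimpleGraph V} {G' : SimpleGraph V'}
    (φ : G ≃g G') : G.map φ.toEquiv.toEmbedding = G' := by
  rw [← SimpleGraph.comap_symm]
  ext a b
  exact φ.symm.map_adj_iff

namespace VN

section Graphs

variable {V V' : Type*}

theorem IsAsym.of_iso {g : SimpleGraph V} {g' : SimpleGraph V'} (hg : IsAsym g) (φ : g ≃g g') :
    IsAsym g' := fun σ x => by
  simpa using congrArg φ (hg ((φ.trans σ).trans φ.symm) (φ.symm x))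

theorem IsAsym.inOrbit_iff {g : SimpleGraph V} (hg : IsAsym g) {v w : V} :
    InOrbit g v w ↔ w = v := by
  refine ⟨?_, fun h => ⟨.refl, h.symm⟩⟩
  rintro ⟨σ, rfl⟩
  exact hg σ v

theorem obf_iso {m : ℕ} {W : Type*} {p q : SimpleGraph (Fin m)} (φ : p ≃g q) (o : Fin m ≃ W) :
    obf (φ.toEquiv.trans o) p = obf o q := by
  conv_rhs => rw [obf, ← φ.map_eq, SimpleGraph.map_map]
  rfl

end Graphs

namespace VNScheme

variable {n m : ℕ} {W : Type*} (Φ : VNScheme n m W)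

theorem vnRank_eq_of_isAsym {g₂ : SimpleGraph (Fin m)} (hg : IsAsym g₂) (g₁ : SimpleGraph (Fin n))
    (v : Fin n) (o₁ o₂ : Fin m ≃ W) (w : Fin m) :
    vnRank (Φ.toFun g₁ (obf o₁ g₂) v) (o₁ w) = vnRank (Φ.toFun g₁ (obf o₂ g₂) v) (o₂ w) := by
  have h := Φ.consistent g₁ g₂ v o₁ o₂ w
  simp only [hg.inOrbit_iff, exists_eq_left] at h
  exact ((Set.ext_iff.mp h _).mp rfl).symm

theorem vnRank_obf_iso {p q : SimpleGraph (Fin m)} (hp : IsAsym p) (φ : p ≃g q)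
    (g₁ : SimpleGraph (Fin n)) (v : Fin n) (o : Fin m ≃ W) (w : Fin m) :
    vnRank (Φ.toFun g₁ (obf o q) v) (o (φ w)) = vnRank (Φ.toFun g₁ (obf o p) v) (o w) := by
  rw [← obf_iso φ o]
  exact Φ.vnRank_eq_of_isAsym hp g₁ v _ o w

end VNScheme

theorem card_filter_vnRank_le {m : ℕ} {W : Type*} (T : W ≃ Fin m) (o : Fin m ≃ W) (h : ℕ) :
    #{j | vnRank T (o j) ≤ h} = #{i : Fin m | (i : ℕ) + 1 ≤ h} :=
  card_bijective (T ∘ o) (T.bijective.comp o.bijective) (by simp [vnRank])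

section RootedClass

variable {V : Type*}

variable (V) in
def rootedIsoSetoid : Setoid (SimpleGraph V × V) where
  r x y := ∃ φ : x.1 ≃g y.1, φ x.2 = y.2
  iseqv :=
    ⟨fun _ => ⟨.refl, rfl⟩, fun ⟨φ, hφ⟩ => ⟨φ.symm, by simp [← hφ]⟩,
      fun ⟨φ, hφ⟩ ⟨ψ, hψ⟩ => ⟨φ.trans ψ, by simp [hφ, hψ]⟩⟩

variable (V) in
def RootedClass : Type _ := Quotient (rootedIsoSetoid V)

noncomputable instance : LinearOrder (RootedClass V) := IsWellOrder.linearOrder WellOrderingRel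

def rootedClass (g : SimpleGraph V) (v : V) : RootedClass V := Quotient.mk _ (g, v)

theorem rootedClass_eq_iff {g g' : SimpleGraph V} {v v' : V} :
    rootedClass g v = rootedClass g' v' ↔ ∃ φ : g ≃g g', φ v = v' :=
  Quotient.eq

theorem rootedClass_iso {g g' : SimpleGraph V} (φ : g ≃g g') (v : V) :
    rootedClass g' (φ v) = rootedClass g v :=
  (rootedClass_eq_iff.mpr ⟨φ, rfl⟩).symm

end RootedClass

section BayesScheme

variable {n m : ℕ} {W : Type*} (F : PMF (SimpleGraph (Fin n) × SimpleGraph (Fin m))) (u : Fin m)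

noncomputable def rootedClassProb (g₁ : SimpleGraph (Fin n)) (k : RootedClass (Fin m)) : ℝ≥0∞ :=
  F.toOuterMeasure {p | p.1 = g₁ ∧ rootedClass p.2 u = k}

/-- Vertices are nominated by decreasing `rootedClassProb` of their rooted class; the arbitrary
well-order on rooted classes breaks ties, so that two vertices get the same key exactly when they
lie in the same automorphism orbit. -/
noncomputable def bayesKey (g₁ : SimpleGraph (Fin n)) (g : SimpleGraph (Fin m)) (i : Fin m) :
    ℝ≥0∞ᵒᵈ ×ₗ RootedClass (Fin m) :=
  toLex (OrderDual.toDual (rootedClassProb F u g₁ (rootedClass g i)), rootedClass g i)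

theorem bayesKey_eq_iff {g₁ : SimpleGraph (Fin n)} {g : SimpleGraph (Fin m)} {i j : Fin m} :
    bayesKey F u g₁ g i = bayesKey F u g₁ g j ↔ InOrbit g i j := by
  refine ⟨fun h => rootedClass_eq_iff.mp (congrArg (fun x => (ofLex x).2) h), fun h => ?_⟩
  simp only [bayesKey, rootedClass_eq_iff.mpr h]

theorem bayesKey_map (g₁ : SimpleGraph (Fin n)) (g : SimpleGraph (Fin m)) (e : Fin m ≃ Fin m) :
    bayesKey F u g₁ (g.map e.toEmbedding) = bayesKey F u g₁ g ∘ e.symm := by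
  funext i
  have h := rootedClass_iso (SimpleGraph.Iso.map e g) (e.symm i)
  rw [SimpleGraph.Iso.map_apply, Equiv.apply_symm_apply] at h
  exact congrArg (fun k => toLex (OrderDual.toDual (rootedClassProb F u g₁ k), k)) h

noncomputable def bayesOrder (g₁ : SimpleGraph (Fin n)) (o : Fin m ≃ W) (gW : SimpleGraph W) :
    W ≃ Fin m :=
  o.symm.trans (Tuple.sort (bayesKey F u g₁ (gW.map o.symm.toEmbedding))).symm

theorem bayesOrder_obf (g₁ : SimpleGraph (Fin n)) (o o' : Fin m ≃ W) (g : SimpleGraph (Fin m))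
    (w : Fin m) :
    bayesOrder F u g₁ o (obf o' g) (o' w) =
      (Tuple.sort (bayesKey F u g₁ g ∘ (o'.trans o.symm).symm)).symm (o'.trans o.symm w) := by
  rw [bayesOrder, obf, SimpleGraph.map_map, ← bayesKey_map]
  rfl

theorem rankSet_bayesOrder (g₁ : SimpleGraph (Fin n)) (o o' : Fin m ≃ W) (g : SimpleGraph (Fin m))
    (v : Fin m) :
    {r | ∃ w, InOrbit g v w ∧ vnRank (bayesOrder F u g₁ o (obf o' g)) (o' w) = r} =
      {r | ∃ j, bayesKey F u g₁ g (Tuple.sort (bayesKey F u g₁ g) j) = bayesKey F u g₁ g v ∧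
        (j : ℕ) + 1 = r} := by
  set f := bayesKey F u g₁ g
  set e := o'.trans o.symm
  have hsort : ∀ j, f (e.symm (Tuple.sort (f ∘ e.symm) j)) = f (Tuple.sort f j) :=
    congrFun (Tuple.comp_perm_comp_sort_eq_comp_sort (f := f) (σ := e.symm))
  have hrank : ∀ w, vnRank (bayesOrder F u g₁ o (obf o' g)) (o' w) =
      (Tuple.sort (f ∘ e.symm)).symm (e w) + 1 := fun w => by rw [vnRank, bayesOrder_obf]
  ext r
  simp only [Set.mem_ofPred_eq, hrank, ← bayesKey_eq_iff (F := F) (u := u) (g₁ := g₁)]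
  constructor
  · rintro ⟨w, hw, hr⟩
    refine ⟨_, ?_, hr⟩
    rw [← hsort, Equiv.apply_symm_apply, Equiv.symm_apply_apply]
    exact hw.symm
  · rintro ⟨j, hj, hr⟩
    refine ⟨e.symm (Tuple.sort (f ∘ e.symm) j), ?_, ?_⟩
    · exact (hsort j ▸ hj).symm
    · rwa [Equiv.apply_symm_apply, Equiv.symm_apply_apply]

noncomputable def bayesScheme (o : Fin m ≃ W) : VNScheme n m W where
  toFun g₁ gW _ := bayesOrder F u g₁ o gW
  consistent g₁ g₂ _ o₁ o₂ v := by rw [rankSet_bayesOrder, rankSet_bayesOrder]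

theorem rootedClassProb_le_of_vnRank_bayesOrder_le {g₁ : SimpleGraph (Fin n)} {o : Fin m ≃ W}
    {g : SimpleGraph (Fin m)} {i j : Fin m}
    (hij : vnRank (bayesOrder F u g₁ o (obf o g)) (o j) ≤
      vnRank (bayesOrder F u g₁ o (obf o g)) (o i)) :
    rootedClassProb F u g₁ (rootedClass g i) ≤ rootedClassProb F u g₁ (rootedClass g j) := by
  simp only [vnRank, bayesOrder_obf, Equiv.self_trans_symm, Equiv.refl_symm, Equiv.coe_refl,
    Function.comp_id, Equiv.refl_apply, add_le_add_iff_right, Fin.val_fin_le] at hij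
  exact Prod.Lex.monotone_fst _ _ (Tuple.le_of_sort_symm_le _ hij)

end BayesScheme

theorem toOuterMeasure_vnRank_le_inter_isoEvent {n m : ℕ} {W : Type*}
    (F : PMF (SimpleGraph (Fin n) × SimpleGraph (Fin m))) (hF : ∀ p ∈ F.support, IsAsym p.2)
    (Φ : VNScheme n m W) (o : Fin m ≃ W) (v : Fin n) (u : Fin m) (h : ℕ)
    (g₁ : SimpleGraph (Fin n)) {g₂ : SimpleGraph (Fin m)} (hg₂ : IsAsym g₂) :
    F.toOuterMeasure ({p | vnRank (Φ.toFun p.1 (obf o p.2) v) (o u) ≤ h} ∩ isoEvent g₁ g₂) =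
      ∑ j with vnRank (Φ.toFun g₁ (obf o g₂) v) (o j) ≤ h,
        rootedClassProb F u g₁ (rootedClass g₂ j) := by
  set E : Fin m → Set (SimpleGraph (Fin n) × SimpleGraph (Fin m)) :=
    fun j => {p | p.1 = g₁ ∧ rootedClass p.2 u = rootedClass g₂ j}
  have hdisj : (Set.univ : Set (Fin m)).PairwiseDisjoint E := fun j _ j' _ hne =>
    Set.disjoint_left.mpr fun p hj hj' =>
      hne (hg₂.inOrbit_iff.mp (rootedClass_eq_iff.mp (hj.2.symm.trans hj'.2))).symm
  refine Eq.trans ?_ (F.toOuterMeasure_biUnion_finset (E := E) (hdisj.subset (Set.subset_univ _)))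
  refine F.toOuterMeasure_apply_eq_of_inter_support_eq (Set.ext fun p => ?_)
  simp only [Set.mem_inter_iff, Set.mem_iUnion, exists_prop, mem_filter, mem_univ, true_and, E,
    isoEvent, Set.mem_ofPred_eq]
  refine and_congr_left fun hp => ⟨?_, ?_⟩
  · rintro ⟨hrank, rfl, ⟨ψ⟩⟩
    exact ⟨ψ u, by rwa [Φ.vnRank_obf_iso (hF p hp) ψ], rfl, (rootedClass_iso ψ u).symm⟩
  · rintro ⟨j, hrank, rfl, hclass⟩
    obtain ⟨ψ, rfl⟩ := rootedClass_eq_iff.mp hclass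
    exact ⟨by rwa [Φ.vnRank_obf_iso (hF p hp) ψ] at hrank, rfl, ⟨ψ⟩⟩

end VN

theorem conditional_bayes_optimality_general
    {n m c : ℕ} (hcm : c ≤ m)
    {W : Type} (o : Fin m ≃ W)
    (F : PMF (SimpleGraph (Fin n) × SimpleGraph (Fin m)))
    (hF : ∀ p ∈ F.support, VN.IsAsym p.1 ∧ VN.IsAsym p.2)
    (v : Fin n) (hv : (v : ℕ) < c) :
    ∃ Ψ : VN.VNScheme n m W,
      ∀ (Φ : VN.VNScheme n m W) (h : ℕ), 1 ≤ h → h ≤ m →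
        ∀ (g₁ : SimpleGraph (Fin n)) (g₂ : SimpleGraph (Fin m)),
          0 < F.toOuterMeasure (VN.isoEvent g₁ g₂) →
          VN.condProb F
              {p | VN.vnRank (Φ.toFun p.1 (VN.obf o p.2) v)
                  (o ⟨(v : ℕ), lt_of_lt_of_le hv hcm⟩) ≤ h}
              (VN.isoEvent g₁ g₂) ≤
            VN.condProb F
              {p | VN.vnRank (Ψ.toFun p.1 (VN.obf o p.2) v)
                  (o ⟨(v : ℕ), lt_of_lt_of_le hv hcm⟩) ≤ h}
              (VN.isoEvent g₁ g₂) := by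
  set u : Fin m := ⟨v, lt_of_lt_of_le hv hcm⟩
  refine ⟨VN.bayesScheme F u o, fun Φ h _ _ g₁ g₂ hpos => ?_⟩
  have hF₂ : ∀ p ∈ F.support, VN.IsAsym p.2 := fun p hp => (hF p hp).2
  obtain ⟨p, hpF, hpE⟩ := Set.not_disjoint_iff.mp
    (mt (F.toOuterMeasure_apply_eq_zero_iff _).mpr hpos.ne')
  have hg₂ : VN.IsAsym g₂ := (hF₂ p hpF).of_iso hpE.2.some
  refine ENNReal.div_le_div_right ?_ _
  rw [VN.toOuterMeasure_vnRank_le_inter_isoEvent F hF₂ Φ o v u h g₁ hg₂,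
    VN.toOuterMeasure_vnRank_le_inter_isoEvent F hF₂ (VN.bayesScheme F u o) o v u h g₁ hg₂]
  refine Finset.sum_le_sum_of_card_le_of_forall_le _ ?_ fun i hi j hj => ?_
  · rw [VN.card_filter_vnRank_le, VN.card_filter_vnRank_le]
  · simp only [Finset.mem_filter, Finset.mem_univ, true_and] at hi hj
    exact VN.rootedClassProb_le_of_vnRank_bayesOrder_le F u (hj.trans (not_le.mp hi).le)

/-- For `F` supported on pairs of asymmetric graphs with core `C` and vertex of
interest `v* ∈ C`, there is a scheme `Ψ` such that conditionally on each event
`{G₁ = g₁, G₂ ≅ g₂}` of positive probability, the probability that the true corresponding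
vertex receives rank `≤ h` is at least that of any other scheme, for every `h ∈ {1,…,m}`. -/
theorem conditional_bayes_optimality
    {n m c : ℕ} (hn : 1 ≤ n) (hm : 1 ≤ m) (hcn : c ≤ n) (hcm : c ≤ m)
    {W : Type} (hW : Nonempty (Fin m ≃ W)) (o : Fin m ≃ W)
    (F : PMF (SimpleGraph (Fin n) × SimpleGraph (Fin m)))
    (hF : ∀ p ∈ F.support, VN.IsAsym p.1 ∧ VN.IsAsym p.2)
    (v : Fin n) (hv : (v : ℕ) < c) :
    ∃ Ψ : VN.VNScheme n m W,
      ∀ (Φ : VN.VNScheme n m W) (h : ℕ), 1 ≤ h → h ≤ m →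
        ∀ (g₁ : SimpleGraph (Fin n)) (g₂ : SimpleGraph (Fin m)),
          0 < F.toOuterMeasure (VN.isoEvent g₁ g₂) →
          VN.condProb F
              {p | VN.vnRank (Φ.toFun p.1 (VN.obf o p.2) v)
                  (o ⟨(v : ℕ), lt_of_lt_of_le hv hcm⟩) ≤ h}
              (VN.isoEvent g₁ g₂) ≤
            VN.condProb F
              {p | VN.vnRank (Ψ.toFun p.1 (VN.obf o p.2) v)
                  (o ⟨(v : ℕ), lt_of_lt_of_le hv hcm⟩) ≤ h}
              (VN.isoEvent g₁ g₂) :=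
  conditional_bayes_optimality_general hcm o F hF v hv
end

section
/- Fix integers n, m ≥ 1, an obfuscating set W, any probability distribution F on pairs (G₁,G₂) of graphs on V₁ and V₂ with core vertices C (no asymmetry assumption on the support), and a vertex of interest v* ∈ C. Then for every obfuscating function 𝔬 there exists a vertex nomination scheme Ψ such that for every k ∈ {1,…,m−1} and every vertex nomination scheme Φ, L_k(Ψ, v*) ≤ L_k(Φ, v*), where the level-k errors are computed with respect to 𝔬. -/
open Filter MeasureTheory
open scoped ENNReal

open Finset
open scoped Classical

namespace VNOpt

variable {α : Type*} {L : Type*} [LinearOrder L]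

/-- rank of `a` within finset `s` according to key `f`. -/
noncomputable def rks (s : Finset α) (f : α → L) (a : α) : ℕ :=
  #(s.filter fun x => f x < f a)

lemma rks_lt_card {s : Finset α} (f : α → L) {a : α} (ha : a ∈ s) : rks s f a < #s := by
  apply Finset.card_lt_card
  refine ⟨Finset.filter_subset _ _, fun hsub => ?_⟩
  have := Finset.mem_filter.mp (hsub ha)
  exact lt_irrefl _ this.2

lemma rks_lt_rks {s : Finset α} {f : α → L} {a b : α} (ha : a ∈ s) (h : f a < f b) :
    rks s f a < rks s f b := by
  apply Finset.card_lt_card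
  refine ⟨fun x hx => ?_, fun hsub => ?_⟩
  · rw [Finset.mem_filter] at hx ⊢
    exact ⟨hx.1, hx.2.trans h⟩
  · have hmem : a ∈ s.filter fun x => f x < f b := Finset.mem_filter.mpr ⟨ha, h⟩
    have := (Finset.mem_filter.mp (hsub hmem)).2
    exact lt_irrefl _ this

lemma rks_injOn {s : Finset α} {f : α → L} (hf : Set.InjOn f s) :
    Set.InjOn (rks s f) s := by
  intro a ha b hb hab
  rcases lt_trichotomy (f a) (f b) with h | h | h
  · exact absurd hab (ne_of_lt (rks_lt_rks ha h))
  · exact hf ha hb h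
  · exact absurd hab.symm (ne_of_lt (rks_lt_rks hb h))

lemma rks_image {s : Finset α} {f : α → L} (hf : Set.InjOn f s) :
    s.image (rks s f) = Finset.range #s := by
  apply Finset.eq_of_subset_of_card_le
  · intro x hx
    rw [Finset.mem_image] at hx
    obtain ⟨a, ha, rfl⟩ := hx
    exact Finset.mem_range.mpr (rks_lt_card f ha)
  · rw [Finset.card_range, Finset.card_image_of_injOn (rks_injOn hf)]

lemma card_rks_lt {s : Finset α} {f : α → L} (hf : Set.InjOn f s) (k : ℕ) :
    #(s.filter fun a => rks s f a < k) = min k #s := by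
  have h1 : (s.filter fun a => rks s f a < k).image (rks s f)
      = (s.image (rks s f)).filter (· < k) := by
    rw [Finset.filter_image]
  have h2 : #(s.filter fun a => rks s f a < k)
      = #((s.filter fun a => rks s f a < k).image (rks s f)) := by
    rw [Finset.card_image_of_injOn (Set.InjOn.mono (by
      intro x hx; exact (Finset.mem_filter.mp hx).1) (rks_injOn hf))]
  rw [h2, h1, rks_image hf]
  have h3 : (Finset.range #s).filter (· < k) = Finset.range (min k #s) := by
    ext x
    simp [Finset.mem_range, lt_min_iff, and_comm]
  rw [h3, Finset.card_range]

/-- rearrangement-type inequality -/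
lemma sum_le_sum_of_card_le [DecidableEq α] (p : α → ENNReal) {X Y : Finset α}
    (hcard : #(X \ Y) ≤ #(Y \ X))
    (hp : ∀ b ∈ X \ Y, ∀ a ∈ Y \ X, p b ≤ p a) :
    ∑ b ∈ X, p b ≤ ∑ a ∈ Y, p a := by
  rw [← Finset.sum_inter_add_sum_sdiff X Y p, ← Finset.sum_inter_add_sum_sdiff Y X p,
    Finset.inter_comm Y X]
  refine add_le_add le_rfl ?_
  rcases Finset.eq_empty_or_nonempty (X \ Y) with he | hne
  · simp [he]
  have hYX : (Y \ X).Nonempty := by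
    rw [← Finset.card_pos]
    exact lt_of_lt_of_le (Finset.card_pos.mpr hne) hcard
  set M := (Y \ X).inf' hYX p with hM
  calc ∑ b ∈ X \ Y, p b ≤ #(X \ Y) • M := by
        apply Finset.sum_le_card_nsmul
        intro x hx
        exact Finset.le_inf' hYX p (fun a ha => hp x hx a ha)
    _ ≤ #(Y \ X) • M := by
        rw [nsmul_eq_mul, nsmul_eq_mul]
        exact mul_le_mul' (by exact_mod_cast hcard) le_rfl
    _ ≤ ∑ a ∈ Y \ X, p a := Finset.card_nsmul_le_sum _ _ _ (fun a ha => Finset.inf'_le p ha)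

end VNOpt

open Finset
open scoped Classical ENNReal

namespace VNOpt
open VN

variable {n m : ℕ} {W : Type}

/-- the pointed-graph isomorphism setoid -/
def ptd (W : Type) : Setoid (SimpleGraph W × W) where
  r p q := ∃ σ : p.1 ≃g q.1, σ p.2 = q.2
  iseqv := by
    refine ⟨fun p => ⟨SimpleGraph.Iso.refl, rfl⟩, ?_, ?_⟩
    · rintro p q ⟨σ, h⟩
      exact ⟨σ.symm, by rw [← h, σ.symm_apply_apply]⟩
    · rintro p q r ⟨σ, h⟩ ⟨τ, h'⟩
      exact ⟨σ.trans τ, by show τ (σ p.2) = r.2; rw [h, h']⟩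

abbrev PC (W : Type) := Quotient (ptd W)

noncomputable instance [Fintype W] : Fintype (PC W) :=
  @Quotient.fintype _ _ (ptd W) (Classical.decRel _)

noncomputable def idx [Fintype W] : PC W → ℕ := fun β => (Fintype.equivFin (PC W) β : ℕ)

lemma idx_inj [Fintype W] : Function.Injective (idx (W := W)) := by
  intro a b h
  exact (Fintype.equivFin (PC W)).injective (Fin.ext h)

/-- the obfuscation map as a graph isomorphism -/
def obfIso (o : Fin m ≃ W) (g : SimpleGraph (Fin m)) : g ≃g obf o g := by
  refine ⟨o, ?_⟩
  intro a b
  simp only [obf, SimpleGraph.map_adj, Equiv.coe_toEmbedding]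
  constructor
  · rintro ⟨-, x, y, hxy, hx, hy⟩
    rwa [o.injective hx, o.injective hy] at hxy
  · intro h
    exact ⟨fun hab => h.ne (o.injective hab), a, b, h, rfl, rfl⟩

@[simp] lemma obfIso_apply (o : Fin m ≃ W) (g : SimpleGraph (Fin m)) (x : Fin m) :
    obfIso o g x = o x := rfl

lemma obf_trans (o : Fin m ≃ W) {g g' : SimpleGraph (Fin m)} (ι : g ≃g g') :
    obf (ι.toEquiv.trans o) g = obf o g' := by
  ext a b
  simp only [obf, SimpleGraph.map_adj, Equiv.coe_toEmbedding, Equiv.trans_apply]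
  constructor
  · rintro ⟨hne, x, y, hxy, hx, hy⟩
    exact ⟨hne, ι x, ι y, ι.map_adj_iff.mpr hxy, hx, hy⟩
  · rintro ⟨hne, x, y, hxy, hx, hy⟩
    refine ⟨hne, ι.symm x, ι.symm y, ?_, by simpa using hx, by simpa using hy⟩
    have := ι.symm.map_adj_iff (v := x) (w := y)
    exact this.mpr hxy

/-- pointed class of a vertex in a graph on `W` -/
def pcl (h : SimpleGraph W) (w : W) : PC W := Quotient.mk (ptd W) (h, w)

lemma pcl_eq_iff {h h' : SimpleGraph W} {w w' : W} :
    pcl h w = pcl h' w' ↔ ∃ σ : h ≃g h', σ w = w' := by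
  constructor
  · intro hq
    exact Quotient.exact hq
  · intro hex
    exact Quotient.sound hex

lemma pcl_iso {h h' : SimpleGraph W} (φ : h ≃g h') (w : W) : pcl h w = pcl h' (φ w) :=
  Quotient.sound ⟨φ, rfl⟩

variable [Fintype W]

/-- the block of a class: all vertices of `W` whose pointed class in `h` is `β` -/
noncomputable def blk (h : SimpleGraph W) (β : PC W) : Finset W :=
  univ.filter fun w => pcl h w = β

lemma mem_blk {h : SimpleGraph W} {β : PC W} {x : W} :
    x ∈ blk h β ↔ pcl h x = β := by
  simp [blk]

/-- the classes present in `h` -/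
noncomputable def cls (h : SimpleGraph W) : Finset (PC W) :=
  univ.image (pcl h)

lemma pcl_mem_cls (h : SimpleGraph W) (w : W) : pcl h w ∈ cls h :=
  Finset.mem_image.mpr ⟨w, Finset.mem_univ w, rfl⟩

lemma mem_cls {h : SimpleGraph W} {β : PC W} :
    β ∈ cls h ↔ ∃ w, pcl h w = β := by
  simp [cls]

lemma cls_iso {h h' : SimpleGraph W} (φ : h ≃g h') : cls h = cls h' := by
  ext β
  simp only [mem_cls]
  constructor
  · rintro ⟨w, rfl⟩; exact ⟨φ w, (pcl_iso φ w).symm⟩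
  · rintro ⟨w, rfl⟩; exact ⟨φ.symm w, by rw [pcl_iso φ (φ.symm w), φ.apply_symm_apply]⟩

lemma blk_iso {h h' : SimpleGraph W} (φ : h ≃g h') (β : PC W) :
    blk h' β = (blk h β).image φ := by
  ext x
  simp only [mem_blk, Finset.mem_image]
  constructor
  · intro hx
    refine ⟨φ.symm x, ?_, φ.apply_symm_apply x⟩
    rw [pcl_iso φ (φ.symm x), φ.apply_symm_apply]
    exact hx
  · rintro ⟨a, ha, rfl⟩
    rw [← pcl_iso φ a]
    exact ha

lemma card_blk_iso {h h' : SimpleGraph W} (φ : h ≃g h') (β : PC W) :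
    #(blk h' β) = #(blk h β) := by
  rw [blk_iso φ β, Finset.card_image_of_injective _ φ.injective]

/-- the image of an orbit under the obfuscation is a block -/
lemma orbit_blk (o₁ : Fin m ≃ W) (g₂ : SimpleGraph (Fin m)) (u : Fin m) (x : W) :
    (∃ w, InOrbit g₂ u w ∧ o₁ w = x) ↔ x ∈ blk (obf o₁ g₂) (pcl (obf o₁ g₂) (o₁ u)) := by
  rw [mem_blk]
  constructor
  · rintro ⟨w, ⟨σ, hσ⟩, rfl⟩
    refine (pcl_eq_iff.mpr ⟨((obfIso o₁ g₂).symm.trans σ).trans (obfIso o₁ g₂), ?_⟩).symm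
    show obfIso o₁ g₂ (σ ((obfIso o₁ g₂).symm (o₁ u))) = o₁ w
    have h1 : ((obfIso o₁ g₂).symm (o₁ u) : Fin m) = u := o₁.symm_apply_apply u
    rw [h1, hσ]
    rfl
  · intro hx
    obtain ⟨τ, hτ⟩ := pcl_eq_iff.mp hx.symm
    refine ⟨o₁.symm x, ⟨((obfIso o₁ g₂).trans τ).trans (obfIso o₁ g₂).symm, ?_⟩,
      o₁.apply_symm_apply x⟩
    show (obfIso o₁ g₂).symm (τ (obfIso o₁ g₂ u)) = o₁.symm x
    rw [show (obfIso o₁ g₂ u : W) = o₁ u from rfl, hτ]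
    rfl

end VNOpt

set_option linter.unusedSectionVars false
namespace VNOpt
open VN Finset
open scoped Classical ENNReal

variable {n m : ℕ} {W : Type} [Fintype W]

section Keys

variable (o : Fin m ≃ W) (F : PMF (SimpleGraph (Fin n) × SimpleGraph (Fin m))) (ws : W)

noncomputable def pmass (g₁ : SimpleGraph (Fin n)) (β : PC W) : ℝ≥0∞ :=
  ∑ g₂ ∈ univ.filter (fun g₂ : SimpleGraph (Fin m) => pcl (obf o g₂) ws = β), F (g₁, g₂)

noncomputable def ckey (g₁ : SimpleGraph (Fin n)) (β : PC W) : ℝ≥0∞ᵒᵈ ×ₗ ℕ :=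
  toLex (OrderDual.toDual (pmass o F ws g₁ β), idx β)

lemma ckey_inj (g₁ : SimpleGraph (Fin n)) : Function.Injective (ckey o F ws g₁) := by
  intro a b h
  unfold ckey at h
  have h2 := congrArg ofLex h
  simp only [ofLex_toLex] at h2
  exact idx_inj (congrArg Prod.snd h2)

lemma pmass_le_of_ckey_lt {g₁ : SimpleGraph (Fin n)} {β β' : PC W}
    (h : ckey o F ws g₁ β < ckey o F ws g₁ β') :
    pmass o F ws g₁ β' ≤ pmass o F ws g₁ β := by
  unfold ckey at h
  rcases Prod.Lex.lt_iff.mp h with h1 | h1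
  · exact le_of_lt h1
  · exact le_of_eq (OrderDual.toDual.injective h1.1).symm

def eW (w : W) : ℕ := (o.symm w : ℕ)

lemma eW_inj : Function.Injective (eW o) := by
  intro a b h
  have := Fin.ext h
  exact o.symm.injective this

/-- `w` is the designated leader of its block: `ws` if the block is the block of `ws`,
and otherwise the minimal element of the block. -/
def isLead (h : SimpleGraph W) (w : W) : Prop :=
  (pcl h w = pcl h ws ∧ w = ws) ∨
  (pcl h w ≠ pcl h ws ∧ ∀ x ∈ blk h (pcl h w), eW o w ≤ eW o x)

lemma isLead_ws (h : SimpleGraph W) : isLead o ws h ws := Or.inl ⟨rfl, rfl⟩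

lemma lead_unique {h : SimpleGraph W} {a b : W} (ha : isLead o ws h a) (hb : isLead o ws h b)
    (hab : pcl h a = pcl h b) : a = b := by
  rcases ha with ⟨ha1, ha2⟩ | ⟨ha1, ha2⟩ <;> rcases hb with ⟨hb1, hb2⟩ | ⟨hb1, hb2⟩
  · rw [ha2, hb2]
  · exact absurd (hab ▸ ha1 : pcl h b = pcl h ws) hb1
  · exact absurd (hab.symm ▸ hb1 : pcl h a = pcl h ws) ha1
  · have h1 : b ∈ blk h (pcl h a) := mem_blk.mpr hab.symm
    have h2 : a ∈ blk h (pcl h b) := mem_blk.mpr hab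
    exact eW_inj o (le_antisymm (ha2 b h1) (hb2 a h2))

lemma lead_exists {h : SimpleGraph W} {β : PC W} (hβ : β ∈ cls h) :
    ∃ a, pcl h a = β ∧ isLead o ws h a := by
  by_cases hws : β = pcl h ws
  · exact ⟨ws, hws.symm, isLead_ws o ws h⟩
  · obtain ⟨w, hw⟩ := mem_cls.mp hβ
    have hne : (blk h β).Nonempty := ⟨w, mem_blk.mpr hw⟩
    obtain ⟨a, ha, hmin⟩ := Finset.exists_min_image (blk h β) (eW o) hne
    have hpa : pcl h a = β := mem_blk.mp ha
    refine ⟨a, hpa, Or.inr ⟨by rw [hpa]; exact fun hh => hws hh, ?_⟩⟩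
    intro x hx
    rw [hpa] at hx
    exact hmin x hx

noncomputable def key (g₁ : SimpleGraph (Fin n)) (h : SimpleGraph W) (w : W) :
    ℕ ×ₗ ((ℝ≥0∞ᵒᵈ ×ₗ ℕ) ×ₗ ℕ) :=
  toLex (if isLead o ws h w then 0 else 1,
    toLex (ckey o F ws g₁ (pcl h w), eW o w))

lemma key_lt_iff {g₁ : SimpleGraph (Fin n)} {h : SimpleGraph W} {x a : W} :
    key o F ws g₁ h x < key o F ws g₁ h a ↔
      ((if isLead o ws h x then 0 else 1) < (if isLead o ws h a then 0 else 1) ∨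
        ((if isLead o ws h x then 0 else 1) = (if isLead o ws h a then 0 else 1) ∧
          (ckey o F ws g₁ (pcl h x) < ckey o F ws g₁ (pcl h a) ∨
            (ckey o F ws g₁ (pcl h x) = ckey o F ws g₁ (pcl h a) ∧ eW o x < eW o a)))) := by
  unfold key
  rw [Prod.Lex.lt_iff]
  simp only [Prod.Lex.lt_iff, ofLex_toLex]

lemma key_inj (g₁ : SimpleGraph (Fin n)) (h : SimpleGraph W) :
    Function.Injective (key o F ws g₁ h) := by
  intro a b hab
  unfold key at hab
  have h2 := congrArg ofLex hab
  simp only [ofLex_toLex] at h2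
  have h3 := congrArg ofLex (congrArg Prod.snd h2)
  simp only [ofLex_toLex] at h3
  exact eW_inj o (congrArg Prod.snd h3)

/-- counting leaders whose class satisfies `P` -/
lemma count_leaders (h : SimpleGraph W) (P : PC W → Prop) :
    #(univ.filter fun x => isLead o ws h x ∧ P (pcl h x)) = #((cls h).filter P) := by
  apply Finset.card_bij (fun x _ => pcl h x)
  · intro a ha
    rw [mem_filter] at ha ⊢
    exact ⟨pcl_mem_cls h a, ha.2.2⟩
  · intro a ha b hb hab
    rw [mem_filter] at ha hb
    exact lead_unique o ws ha.2.1 hb.2.1 hab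
  · intro β hβ
    rw [mem_filter] at hβ
    obtain ⟨a, hpa, hla⟩ := lead_exists o ws hβ.1
    exact ⟨a, by rw [mem_filter]; exact ⟨mem_univ a, hla, hpa ▸ hβ.2⟩, hpa⟩

lemma rk_of_lead (g₁ : SimpleGraph (Fin n)) (h : SimpleGraph W) {a : W}
    (ha : isLead o ws h a) :
    rks univ (key o F ws g₁ h) a = rks (cls h) (ckey o F ws g₁) (pcl h a) := by
  unfold rks
  have hset : (univ.filter fun x => key o F ws g₁ h x < key o F ws g₁ h a)
      = univ.filter fun x => isLead o ws h x ∧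
          ckey o F ws g₁ (pcl h x) < ckey o F ws g₁ (pcl h a) := by
    ext x
    simp only [mem_filter, mem_univ, true_and]
    rw [key_lt_iff]
    rw [if_pos ha]
    constructor
    · rintro (h1 | ⟨h1, h2⟩)
      · omega
      · have hlx : isLead o ws h x := by
          by_contra hc
          rw [if_neg hc] at h1
          omega
        refine ⟨hlx, ?_⟩
        rcases h2 with h2 | ⟨h2, h3⟩
        · exact h2
        · have := lead_unique o ws hlx ha (ckey_inj o F ws g₁ h2)
          subst this
          omega
    · rintro ⟨h1, h2⟩
      exact Or.inr ⟨by rw [if_pos h1], Or.inl h2⟩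
  rw [hset]
  have hc := count_leaders o ws h (fun β' => ckey o F ws g₁ β' < ckey o F ws g₁ (pcl h a))
  convert hc using 2 <;> congr!

noncomputable def nl (h : SimpleGraph W) (β : PC W) : Finset W :=
  (blk h β).filter fun x => ¬ isLead o ws h x

noncomputable def off (g₁ : SimpleGraph (Fin n)) (h : SimpleGraph W) (β : PC W) : ℕ :=
  ∑ β' ∈ (cls h).filter (fun β' => ckey o F ws g₁ β' < ckey o F ws g₁ β), #(nl o ws h β')

lemma card_nl {h : SimpleGraph W} {β : PC W} (hβ : β ∈ cls h) :
    #(nl o ws h β) + 1 = #(blk h β) := by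
  obtain ⟨a, hpa, hla⟩ := lead_exists o ws hβ
  have hsplit : blk h β = insert a (nl o ws h β) := by
    ext x
    rw [Finset.mem_insert]
    unfold nl
    rw [mem_filter]
    constructor
    · intro hx
      by_cases hlx : isLead o ws h x
      · exact Or.inl (lead_unique o ws hlx hla (by rw [mem_blk.mp hx, hpa]))
      · exact Or.inr ⟨hx, hlx⟩
    · rintro (rfl | ⟨hx, _⟩)
      · exact mem_blk.mpr hpa
      · exact hx
  rw [hsplit, Finset.card_insert_of_notMem (by unfold nl; rw [mem_filter]; tauto)]

end Keys
end VNOpt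

namespace VNOpt
open VN Finset
open scoped Classical ENNReal
set_option linter.unusedSectionVars false

variable {n m : ℕ} {W : Type} [Fintype W]
variable (o : Fin m ≃ W) (F : PMF (SimpleGraph (Fin n) × SimpleGraph (Fin m))) (ws : W)

lemma blk_eq_insert {h : SimpleGraph W} {β : PC W} {a : W} (hpa : pcl h a = β)
    (hla : isLead o ws h a) : blk h β = insert a (nl o ws h β) := by
  ext x
  rw [Finset.mem_insert]
  unfold nl
  rw [mem_filter]
  constructor
  · intro hx
    by_cases hlx : isLead o ws h x
    · exact Or.inl (lead_unique o ws hlx hla (by rw [mem_blk.mp hx, hpa]))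
    · exact Or.inr ⟨hx, hlx⟩
  · rintro (rfl | ⟨hx, _⟩)
    · exact mem_blk.mpr hpa
    · exact hx

lemma rk_of_nonlead (g₁ : SimpleGraph (Fin n)) (h : SimpleGraph W) {a : W}
    (hna : ¬ isLead o ws h a) :
    rks univ (key o F ws g₁ h) a
      = #(cls h) + off o F ws g₁ h (pcl h a) + rks (nl o ws h (pcl h a)) (eW o) a := by
  have hsplit : (univ.filter fun x => key o F ws g₁ h x < key o F ws g₁ h a)
      = ((univ.filter fun x => isLead o ws h x)
        ∪ (univ.filter fun x => ¬ isLead o ws h x ∧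
            ckey o F ws g₁ (pcl h x) < ckey o F ws g₁ (pcl h a)))
        ∪ (univ.filter fun x => ¬ isLead o ws h x ∧ pcl h x = pcl h a ∧ eW o x < eW o a) := by
    ext x
    simp only [Finset.mem_union, mem_filter, mem_univ, true_and]
    rw [key_lt_iff, if_neg hna]
    constructor
    · rintro (h1 | ⟨h1, h2⟩)
      · by_cases hlx : isLead o ws h x
        · exact Or.inl (Or.inl hlx)
        · rw [if_neg hlx] at h1; omega
      · have hlx : ¬ isLead o ws h x := by
          by_contra hc
          rw [if_pos hc] at h1
          omega
        rcases h2 with h2 | ⟨h2, h3⟩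
        · exact Or.inl (Or.inr ⟨hlx, h2⟩)
        · exact Or.inr ⟨hlx, ckey_inj o F ws g₁ h2, h3⟩
    · rintro ((hlx | ⟨hlx, h2⟩) | ⟨hlx, h2, h3⟩)
      · refine Or.inl ?_
        rw [if_pos hlx]
        omega
      · exact Or.inr ⟨by rw [if_neg hlx], Or.inl h2⟩
      · exact Or.inr ⟨by rw [if_neg hlx], Or.inr ⟨by rw [h2], h3⟩⟩
  have hd1 : Disjoint (univ.filter fun x => isLead o ws h x)
      (univ.filter fun x => ¬ isLead o ws h x ∧
        ckey o F ws g₁ (pcl h x) < ckey o F ws g₁ (pcl h a)) := by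
    rw [Finset.disjoint_left]
    intro x hx hx'
    exact (mem_filter.mp hx').2.1 (mem_filter.mp hx).2
  have hd2 : Disjoint ((univ.filter fun x => isLead o ws h x)
      ∪ (univ.filter fun x => ¬ isLead o ws h x ∧
          ckey o F ws g₁ (pcl h x) < ckey o F ws g₁ (pcl h a)))
      (univ.filter fun x => ¬ isLead o ws h x ∧ pcl h x = pcl h a ∧ eW o x < eW o a) := by
    rw [Finset.disjoint_left]
    intro x hx hx'
    rw [Finset.mem_union] at hx
    rw [mem_filter] at hx'
    rcases hx with hx | hx
    · exact hx'.2.1 (mem_filter.mp hx).2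
    · have h2 := (mem_filter.mp hx).2.2
      rw [hx'.2.2.1] at h2
      exact lt_irrefl _ h2
  have hA : #(univ.filter fun x => isLead o ws h x) = #(cls h) := by
    have hcl := count_leaders o ws h (fun _ => True)
    simpa using hcl
  have hB : #(univ.filter fun x => ¬ isLead o ws h x ∧
      ckey o F ws g₁ (pcl h x) < ckey o F ws g₁ (pcl h a)) = off o F ws g₁ h (pcl h a) := by
    unfold off
    rw [Finset.card_eq_sum_card_fiberwise (f := pcl h)
      (t := (cls h).filter (fun β' => ckey o F ws g₁ β' < ckey o F ws g₁ (pcl h a)))]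
    · apply Finset.sum_congr rfl
      intro β' hβ'
      rw [mem_filter] at hβ'
      congr 1
      ext x
      unfold nl
      simp only [mem_filter, mem_univ, true_and, mem_blk]
      constructor
      · rintro ⟨⟨h1, _⟩, h2⟩
        exact ⟨h2, h1⟩
      · rintro ⟨h1, h2⟩
        exact ⟨⟨h2, by rw [h1]; exact hβ'.2⟩, h1⟩
    · intro x hx
      rw [Finset.mem_coe, mem_filter] at hx ⊢
      exact ⟨pcl_mem_cls h x, hx.2.2⟩
  have hC : #(univ.filter fun x => ¬ isLead o ws h x ∧ pcl h x = pcl h a ∧ eW o x < eW o a)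
      = rks (nl o ws h (pcl h a)) (eW o) a := by
    unfold rks
    congr 1
    ext x
    unfold nl
    simp only [mem_filter, mem_univ, true_and, mem_blk]
    tauto
  show #(univ.filter fun x => key o F ws g₁ h x < key o F ws g₁ h a) = _
  rw [hsplit, Finset.card_union_of_disjoint hd2, Finset.card_union_of_disjoint hd1, hA, hB, hC]

lemma blk_rank_image (g₁ : SimpleGraph (Fin n)) (h : SimpleGraph W) {β : PC W}
    (hβ : β ∈ cls h) :
    (blk h β).image (rks univ (key o F ws g₁ h))
      = insert (rks (cls h) (ckey o F ws g₁) β)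
          ((Finset.range #(nl o ws h β)).image
            (fun i => #(cls h) + off o F ws g₁ h β + i)) := by
  obtain ⟨a, hpa, hla⟩ := lead_exists o ws hβ
  rw [blk_eq_insert o ws hpa hla, Finset.image_insert]
  congr 1
  · rw [rk_of_lead o F ws g₁ h hla, hpa]
  · have h1 : Set.EqOn (rks univ (key o F ws g₁ h))
        ((fun i => #(cls h) + off o F ws g₁ h β + i) ∘ (rks (nl o ws h β) (eW o)))
        (nl o ws h β) := by
      intro x hx
      rw [Finset.mem_coe] at hx
      have hnx : ¬ isLead o ws h x := (mem_filter.mp hx).2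
      have hpx : pcl h x = β := mem_blk.mp (Finset.filter_subset _ _ hx)
      show rks univ (key o F ws g₁ h) x = _
      rw [rk_of_nonlead o F ws g₁ h hnx, hpx]
      rfl
    rw [Finset.image_congr h1, ← Finset.image_image,
      rks_image (f := eW o) (fun x _ y _ hxy => eW_inj o hxy)]

lemma off_iso (g₁ : SimpleGraph (Fin n)) {h h' : SimpleGraph W} (φ : h ≃g h') (β : PC W) :
    off o F ws g₁ h β = off o F ws g₁ h' β := by
  have hcls : cls h = cls h' := cls_iso φ
  have hnl : ∀ β'' ∈ cls h, #(nl o ws h β'') = #(nl o ws h' β'') := by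
    intro β'' hβ''
    have hb := card_blk_iso φ β''
    have h1 := card_nl o ws hβ''
    have h2 := card_nl o ws (W := W) (hcls ▸ hβ'' : β'' ∈ cls h')
    omega
  unfold off
  rw [← hcls]
  apply Finset.sum_congr rfl
  intro β'' hβ''
  exact hnl β'' (Finset.mem_filter.mp hβ'').1

lemma rank_set_eq (g₁ : SimpleGraph (Fin n)) {h h' : SimpleGraph W} (φ : h ≃g h')
    {β : PC W} (hβ : β ∈ cls h) :
    (blk h β).image (rks univ (key o F ws g₁ h))
      = (blk h' β).image (rks univ (key o F ws g₁ h')) := by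
  have hcls : cls h = cls h' := cls_iso φ
  have hβ' : β ∈ cls h' := hcls ▸ hβ
  rw [blk_rank_image o F ws g₁ h hβ, blk_rank_image o F ws g₁ h' hβ']
  have hnlβ : #(nl o ws h β) = #(nl o ws h' β) := by
    have hb := card_blk_iso φ β
    have h1 := card_nl o ws hβ
    have h2 := card_nl o ws hβ'
    omega
  rw [hcls, hnlβ, off_iso o F ws g₁ φ β]

variable (hc : Fintype.card W = m)

noncomputable def T (g₁ : SimpleGraph (Fin n)) (h : SimpleGraph W) : W ≃ Fin m :=
  Equiv.ofBijective (fun w => (⟨rks univ (key o F ws g₁ h) w, by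
      have h1 := rks_lt_card (key o F ws g₁ h) (mem_univ w)
      rwa [Finset.card_univ, hc] at h1⟩ : Fin m))
    (by
      rw [Fintype.bijective_iff_injective_and_card]
      refine ⟨?_, by simp [hc]⟩
      intro a b hab
      have h1 : rks univ (key o F ws g₁ h) a = rks univ (key o F ws g₁ h) b :=
        congrArg Fin.val hab
      exact rks_injOn (fun x _ y _ hxy => key_inj o F ws g₁ h hxy)
        (Finset.mem_coe.mpr (mem_univ a)) (Finset.mem_coe.mpr (mem_univ b)) h1)

lemma vnRank_T (g₁ : SimpleGraph (Fin n)) (h : SimpleGraph W) (w : W) :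
    vnRank (T o F ws hc g₁ h) w = rks univ (key o F ws g₁ h) w + 1 := rfl

/-- the change-of-obfuscation isomorphism -/
def transIso (o₁ o₂ : Fin m ≃ W) (g₂ : SimpleGraph (Fin m)) : obf o₁ g₂ ≃g obf o₂ g₂ :=
  (obfIso o₁ g₂).symm.trans (obfIso o₂ g₂)

lemma transIso_apply (o₁ o₂ : Fin m ≃ W) (g₂ : SimpleGraph (Fin m)) (x : W) :
    transIso o₁ o₂ g₂ x = o₂ (o₁.symm x) := rfl

lemma consistent_T : ∀ (g₁ : SimpleGraph (Fin n)) (g₂ : SimpleGraph (Fin m))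
    (v : Fin n) (o₁ o₂ : Fin m ≃ W) (u : Fin m),
    {r : ℕ | ∃ w, InOrbit g₂ u w ∧ vnRank (T o F ws hc g₁ (obf o₁ g₂)) (o₁ w) = r} =
    {r : ℕ | ∃ w, InOrbit g₂ u w ∧ vnRank (T o F ws hc g₁ (obf o₂ g₂)) (o₂ w) = r} := by
  intro g₁ g₂ v o₁ o₂ u
  have key1 : ∀ (o₁ : Fin m ≃ W),
      {r : ℕ | ∃ w, InOrbit g₂ u w ∧ vnRank (T o F ws hc g₁ (obf o₁ g₂)) (o₁ w) = r} =
      ↑((blk (obf o₁ g₂) (pcl (obf o₁ g₂) (o₁ u))).image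
          (fun x => rks univ (key o F ws g₁ (obf o₁ g₂)) x + 1)) := by
    intro o₃
    ext r
    simp only [Set.mem_setOf_eq, Finset.coe_image, Set.mem_image, Finset.mem_coe]
    constructor
    · rintro ⟨w, hw, rfl⟩
      exact ⟨o₃ w, (orbit_blk o₃ g₂ u (o₃ w)).mp ⟨w, hw, rfl⟩, rfl⟩
    · rintro ⟨x, hx, rfl⟩
      obtain ⟨w, hw, rfl⟩ := (orbit_blk o₃ g₂ u x).mpr hx
      exact ⟨w, hw, rfl⟩
  rw [key1 o₁, key1 o₂]
  rw [Finset.coe_inj]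
  have hβ : pcl (obf o₂ g₂) (o₂ u) = pcl (obf o₁ g₂) (o₁ u) := by
    rw [pcl_iso (transIso o₁ o₂ g₂) (o₁ u)]
    rw [transIso_apply, o₁.symm_apply_apply]
  rw [hβ]
  have φ := transIso o₁ o₂ g₂
  have h2 := rank_set_eq o F ws g₁ φ (pcl_mem_cls (obf o₁ g₂) (o₁ u))
  calc (blk (obf o₁ g₂) (pcl (obf o₁ g₂) (o₁ u))).image
        (fun x => rks univ (key o F ws g₁ (obf o₁ g₂)) x + 1)
      = ((blk (obf o₁ g₂) (pcl (obf o₁ g₂) (o₁ u))).image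
          (rks univ (key o F ws g₁ (obf o₁ g₂)))).image (fun r => r + 1) := by
        rw [Finset.image_image]
        rfl
    _ = ((blk (obf o₂ g₂) (pcl (obf o₁ g₂) (o₁ u))).image
          (rks univ (key o F ws g₁ (obf o₂ g₂)))).image (fun r => r + 1) := by rw [h2]
    _ = (blk (obf o₂ g₂) (pcl (obf o₁ g₂) (o₁ u))).image
          (fun x => rks univ (key o F ws g₁ (obf o₂ g₂)) x + 1) := by
        rw [Finset.image_image]
        rfl

noncomputable def Psi : VNScheme n m W where
  toFun g₁ h _ := T o F ws hc g₁ h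
  consistent := consistent_T o F ws hc

end VNOpt

namespace VNOpt
open VN Finset
open scoped Classical ENNReal
set_option linter.unusedSectionVars false
set_option linter.unusedVariables false

variable {n m : ℕ} {W : Type} [Fintype W]
variable (o : Fin m ≃ W) (F : PMF (SimpleGraph (Fin n) × SimpleGraph (Fin m)))

/-- the isomorphism setoid on graphs on `Fin m` -/
def gs (m : ℕ) : Setoid (SimpleGraph (Fin m)) where
  r g g' := Nonempty (g ≃g g')
  iseqv := ⟨fun g => ⟨SimpleGraph.Iso.refl⟩, fun ⟨σ⟩ => ⟨σ.symm⟩, fun ⟨σ⟩ ⟨τ⟩ => ⟨σ.trans τ⟩⟩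

noncomputable instance : Fintype (Quotient (gs m)) :=
  @Quotient.fintype _ _ (gs m) (Classical.decRel _)

lemma vnRank_inj {T : W ≃ Fin m} {x y : W} (h : vnRank T x = vnRank T y) : x = y := by
  unfold vnRank at h
  exact T.injective (Fin.ext (by omega))

lemma err_sum (Φ : VNScheme n m W) (v : Fin n) (u : Fin m) (k : ℕ) :
    vnError F Φ o v u k
      = (∑ q : SimpleGraph (Fin n) × SimpleGraph (Fin m),
          if k + 1 ≤ vnRank (Φ.toFun q.1 (obf o q.2) v) (o u) then F q else 0).toReal := by
  unfold vnError
  rw [PMF.toOuterMeasure_apply, tsum_fintype]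
  congr 1
  apply Finset.sum_congr rfl
  intro q _
  by_cases hq : k + 1 ≤ vnRank (Φ.toFun q.1 (obf o q.2) v) (o u)
  · simp [Set.indicator_apply, Set.mem_setOf_eq, hq]
    intro h; omega
  · simp [Set.indicator_apply, Set.mem_setOf_eq, hq]
    intro h; omega

/-- mass of a class equals the sum of `F` over its fiber within the iso class -/
lemma pmass_fiber (g₁ : SimpleGraph (Fin n)) (ws : W) (γ : Quotient (gs m)) {β : PC W}
    (hβ : β ∈ cls (obf o (Quotient.out γ))) :
    pmass o F ws g₁ β
      = ∑ g₂ ∈ (univ.filter fun g₂ => Quotient.mk (gs m) g₂ = γ).filter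
          (fun g₂ => pcl (obf o g₂) ws = β), F (g₁, g₂) := by
  unfold pmass
  apply Finset.sum_congr _ (fun _ _ => rfl)
  ext g₂
  simp only [mem_filter, mem_univ, true_and]
  constructor
  · intro hg
    refine ⟨?_, hg⟩
    obtain ⟨x, hx⟩ := mem_cls.mp hβ
    obtain ⟨σ, hσ⟩ := pcl_eq_iff.mp (hg.trans hx.symm)
    have ι : g₂ ≃g Quotient.out γ :=
      ((obfIso o g₂).trans σ).trans (obfIso o (Quotient.out γ)).symm
    exact (Quotient.sound ⟨ι⟩ : Quotient.mk (gs m) g₂ = Quotient.mk (gs m) (Quotient.out γ)).trans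
      (Quotient.out_eq γ)
  · exact fun hg => hg.2

/-- key fact: the rank `Φ` gives to `o u` lies in the rank set of the corresponding block
of the reference graph `h₀`, hence is at least its minimum. -/
lemma phi_rank_ge (g₁ : SimpleGraph (Fin n)) (Φ : VNScheme n m W) (v : Fin n) (u : Fin m)
    (γ : Quotient (gs m)) {g₂ : SimpleGraph (Fin m)} (hg : Quotient.mk (gs m) g₂ = γ) :
    sInf {r : ℕ | ∃ x, pcl (obf o (Quotient.out γ)) x = pcl (obf o g₂) (o u) ∧
        vnRank (Φ.toFun g₁ (obf o (Quotient.out γ)) v) x = r}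
      ≤ vnRank (Φ.toFun g₁ (obf o g₂) v) (o u) := by
  obtain ⟨ι⟩ : Nonempty (g₂ ≃g Quotient.out γ) :=
    Quotient.exact (hg.trans (Quotient.out_eq γ).symm)
  set o' : Fin m ≃ W := ι.toEquiv.trans o with ho'
  have hobf : obf o' g₂ = obf o (Quotient.out γ) := obf_trans o ι
  have hcon := Φ.consistent g₁ g₂ v o o' u
  have hmem : vnRank (Φ.toFun g₁ (obf o g₂) v) (o u) ∈
      {r : ℕ | ∃ w, InOrbit g₂ u w ∧ vnRank (Φ.toFun g₁ (obf o g₂) v) (o w) = r} :=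
    ⟨u, ⟨SimpleGraph.Iso.refl, rfl⟩, rfl⟩
  rw [hcon] at hmem
  obtain ⟨w, hw, hr⟩ := hmem
  apply Nat.sInf_le
  refine ⟨o' w, ?_, by rw [← hobf]; exact hr⟩
  -- pcl h₀ (o' w) = pcl (obf o g₂) (o u)
  rw [← hobf]
  obtain ⟨σ, hσ⟩ := hw
  have h1 : pcl (obf o g₂) (o u) = pcl (obf o' g₂) (o' u) := by
    rw [pcl_iso (transIso o o' g₂) (o u)]
    rw [transIso_apply, o.symm_apply_apply]
  have h2 : pcl (obf o' g₂) (o' u) = pcl (obf o' g₂) (o' w) := by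
    apply pcl_eq_iff.mpr
    refine ⟨((obfIso o' g₂).symm.trans σ).trans (obfIso o' g₂), ?_⟩
    show obfIso o' g₂ (σ ((obfIso o' g₂).symm (o' u))) = o' w
    have h3 : ((obfIso o' g₂).symm (o' u) : Fin m) = u := o'.symm_apply_apply u
    rw [h3, hσ]
    rfl
  rw [h1, h2]

/-- the per-`(g₁, γ)` core inequality -/
lemma core (g₁ : SimpleGraph (Fin n)) (Φ : VNScheme n m W) (v : Fin n) (u : Fin m)
    (k : ℕ) (γ : Quotient (gs m)) :
    ∑ g₂ ∈ univ.filter (fun g₂ => Quotient.mk (gs m) g₂ = γ),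
      (if k ≤ rks (cls (obf o g₂)) (ckey o F (o u) g₁) (pcl (obf o g₂) (o u))
        then F (g₁, g₂) else 0)
    ≤ ∑ g₂ ∈ univ.filter (fun g₂ => Quotient.mk (gs m) g₂ = γ),
      (if k + 1 ≤ vnRank (Φ.toFun g₁ (obf o g₂) v) (o u) then F (g₁, g₂) else 0) := by
  set g₀ := Quotient.out γ with hg₀
  set h₀ := obf o g₀ with hh₀
  set Cl := cls h₀ with hCl
  set ws := o u with hws
  set mr : PC W → ℕ := fun β => sInf {r : ℕ | ∃ x, pcl h₀ x = β ∧
    vnRank (Φ.toFun g₁ h₀ v) x = r} with hmr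
  -- facts about mr
  have hmr_mem : ∀ β ∈ Cl, ∃ x, pcl h₀ x = β ∧ vnRank (Φ.toFun g₁ h₀ v) x = mr β := by
    intro β hβ
    obtain ⟨x, hx⟩ := mem_cls.mp hβ
    exact Nat.sInf_mem (⟨vnRank (Φ.toFun g₁ h₀ v) x, x, hx, rfl⟩ :
      {r : ℕ | ∃ x, pcl h₀ x = β ∧ vnRank (Φ.toFun g₁ h₀ v) x = r}.Nonempty)
  have hmr_inj : ∀ β ∈ Cl, ∀ β' ∈ Cl, mr β = mr β' → β = β' := by
    intro β hβ β' hβ' he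
    obtain ⟨x, hx1, hx2⟩ := hmr_mem β hβ
    obtain ⟨y, hy1, hy2⟩ := hmr_mem β' hβ'
    have : x = y := vnRank_inj (by rw [hx2, hy2, he])
    rw [← hx1, ← hy1, this]
  have hmr_pos : ∀ β ∈ Cl, 1 ≤ mr β := by
    intro β hβ
    obtain ⟨x, _, hx2⟩ := hmr_mem β hβ
    rw [← hx2]
    unfold vnRank
    omega
  -- rewrite LHS over classes
  have hfib : ∀ g₂ ∈ univ.filter (fun g₂ => Quotient.mk (gs m) g₂ = γ),
      cls (obf o g₂) = Cl := by
    intro g₂ hg₂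
    rw [mem_filter] at hg₂
    obtain ⟨ι⟩ : Nonempty (g₂ ≃g g₀) := Quotient.exact (hg₂.2.trans (Quotient.out_eq γ).symm)
    have hobf : obf (ι.toEquiv.trans o) g₂ = h₀ := obf_trans o ι
    exact (cls_iso (hobf ▸ transIso o (ι.toEquiv.trans o) g₂ : obf o g₂ ≃g h₀))
  have hβmem : ∀ g₂ ∈ univ.filter (fun g₂ => Quotient.mk (gs m) g₂ = γ),
      pcl (obf o g₂) ws ∈ Cl := by
    intro g₂ hg₂
    rw [← hfib g₂ hg₂]
    exact pcl_mem_cls _ _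
  -- step 1 : LHS = sum over classes
  have hLHS : ∑ g₂ ∈ univ.filter (fun g₂ => Quotient.mk (gs m) g₂ = γ),
      (if k ≤ rks (cls (obf o g₂)) (ckey o F ws g₁) (pcl (obf o g₂) ws)
        then F (g₁, g₂) else 0)
      = ∑ β ∈ Cl, (if k ≤ rks Cl (ckey o F ws g₁) β then pmass o F ws g₁ β else 0) := by
    rw [← Finset.sum_fiberwise_of_maps_to (g := fun g₂ => pcl (obf o g₂) ws) hβmem]
    apply Finset.sum_congr rfl
    intro β hβ
    by_cases hcond : k ≤ rks Cl (ckey o F ws g₁) β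
    · rw [if_pos hcond, pmass_fiber o F g₁ ws γ hβ]
      apply Finset.sum_congr rfl
      intro g₂ hg₂
      rw [mem_filter] at hg₂
      rw [hfib g₂ hg₂.1, hg₂.2, if_pos hcond]
    · rw [if_neg hcond]
      rw [Finset.sum_congr rfl (fun g₂ hg₂ => ?_), Finset.sum_const_zero]
      rw [mem_filter] at hg₂
      rw [hfib g₂ hg₂.1, hg₂.2, if_neg hcond]
  -- step 2 : RHS ≥ sum over classes with mr > k
  have hRHS : ∑ β ∈ Cl.filter (fun β => k + 1 ≤ mr β), pmass o F ws g₁ β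
      ≤ ∑ g₂ ∈ univ.filter (fun g₂ => Quotient.mk (gs m) g₂ = γ),
        (if k + 1 ≤ vnRank (Φ.toFun g₁ (obf o g₂) v) (o u) then F (g₁, g₂) else 0) := by
    rw [← Finset.sum_fiberwise_of_maps_to (g := fun g₂ => pcl (obf o g₂) ws) hβmem
      (f := fun g₂ => if k + 1 ≤ vnRank (Φ.toFun g₁ (obf o g₂) v) (o u) then F (g₁, g₂) else 0)]
    rw [Finset.sum_filter]
    apply Finset.sum_le_sum
    intro β hβ
    by_cases hcond : k + 1 ≤ mr β
    · rw [if_pos hcond, pmass_fiber o F g₁ ws γ hβ]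
      apply Finset.sum_le_sum
      intro g₂ hg₂
      rw [mem_filter] at hg₂
      have hrank := phi_rank_ge o g₁ Φ v u γ (mem_filter.mp hg₂.1).2
      rw [hg₂.2] at hrank
      rw [if_pos (le_trans hcond hrank)]
    · rw [if_neg hcond]
      positivity
  rw [hLHS, ← Finset.sum_filter]
  refine le_trans ?_ hRHS
  -- the rearrangement step
  set X := Cl.filter (fun β => k ≤ rks Cl (ckey o F ws g₁) β) with hX
  set Y := Cl.filter (fun β => k + 1 ≤ mr β) with hY
  have hckey_injOn : Set.InjOn (ckey o F ws g₁) Cl := fun x _ y _ h => ckey_inj o F ws g₁ h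
  apply sum_le_sum_of_card_le
  · -- #(X \ Y) ≤ #(Y \ X)
    have hXc : #(Cl.filter (fun β => rks Cl (ckey o F ws g₁) β < k)) = min k #Cl :=
      card_rks_lt hckey_injOn k
    have hXcompl : #X + #(Cl.filter (fun β => rks Cl (ckey o F ws g₁) β < k)) = #Cl := by
      rw [hX]
      have hsp := Finset.card_filter_add_card_filter_not (s := Cl)
        (p := fun β => k ≤ rks Cl (ckey o F ws g₁) β)
      have heq : Cl.filter (fun β => ¬ k ≤ rks Cl (ckey o F ws g₁) β)
          = Cl.filter (fun β => rks Cl (ckey o F ws g₁) β < k) := by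
        apply Finset.filter_congr
        intro β _
        simp [not_le]
      rw [heq] at hsp
      exact hsp
    have hYS : #(Cl.filter (fun β => mr β ≤ k)) ≤ min k #Cl := by
      refine le_min ?_ (le_trans (Finset.card_filter_le _ _) le_rfl)
      calc #(Cl.filter (fun β => mr β ≤ k)) ≤ #(Finset.Icc 1 k) := by
            apply Finset.card_le_card_of_injOn mr
            · intro β hβ
              rw [Finset.mem_coe, mem_filter] at hβ
              rw [Finset.mem_coe, Finset.mem_Icc]
              exact ⟨hmr_pos β hβ.1, hβ.2⟩
            · intro β hβ β' hβ' he
              rw [Finset.mem_coe, mem_filter] at hβ hβ'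
              exact hmr_inj β hβ.1 β' hβ'.1 he
        _ = k := by rw [Nat.card_Icc]; omega
    have hYcompl : #Y + #(Cl.filter (fun β => mr β ≤ k)) = #Cl := by
      rw [hY]
      have hsp := Finset.card_filter_add_card_filter_not (s := Cl)
        (p := fun β => k + 1 ≤ mr β)
      have heq : Cl.filter (fun β => ¬ k + 1 ≤ mr β) = Cl.filter (fun β => mr β ≤ k) := by
        apply Finset.filter_congr
        intro β _
        constructor
        · intro hh; omega
        · intro hh; omega
      rw [heq] at hsp
      exact hsp
    have hXY : #X ≤ #Y := by omega
    have h1 : #(X ∩ Y) + #(X \ Y) = #X := Finset.card_inter_add_card_sdiff X Y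
    have h2 : #(Y ∩ X) + #(Y \ X) = #Y := Finset.card_inter_add_card_sdiff Y X
    rw [Finset.inter_comm] at h2
    omega
  · -- pointwise comparison
    intro b hb a ha
    rw [Finset.mem_sdiff] at hb ha
    have hbX : b ∈ Cl ∧ k ≤ rks Cl (ckey o F ws g₁) b := mem_filter.mp hb.1
    have haCl : a ∈ Cl := (mem_filter.mp ha.1).1
    have haX : ¬ (k ≤ rks Cl (ckey o F ws g₁) a) := fun hcon =>
      ha.2 (mem_filter.mpr ⟨haCl, hcon⟩)
    have hlt : rks Cl (ckey o F ws g₁) a < rks Cl (ckey o F ws g₁) b := by omega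
    have hck : ckey o F ws g₁ a < ckey o F ws g₁ b := by
      rcases lt_trichotomy (ckey o F ws g₁ a) (ckey o F ws g₁ b) with h | h | h
      · exact h
      · exact absurd (congrArg (rks Cl (ckey o F ws g₁)) (ckey_inj o F ws g₁ h)) (by omega)
      · exact absurd (rks_lt_rks hbX.1 h) (by omega)
    exact pmass_le_of_ckey_lt o F ws hck
end VNOpt


namespace VNOpt
open VN Finset
open scoped Classical ENNReal
set_option linter.unusedSectionVars false

variable {n m : ℕ} {W : Type} [Fintype W]
variable (o : Fin m ≃ W) (F : PMF (SimpleGraph (Fin n) × SimpleGraph (Fin m)))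

lemma main_ineq (v : Fin n) (u : Fin m) (hc : Fintype.card W = m) (k : ℕ)
    (Φ : VNScheme n m W) :
    vnError F (Psi o F (o u) hc) o v u k ≤ vnError F Φ o v u k := by
  rw [err_sum, err_sum]
  apply ENNReal.toReal_mono
  · apply ne_of_lt
    calc ∑ q : SimpleGraph (Fin n) × SimpleGraph (Fin m),
          (if k + 1 ≤ vnRank (Φ.toFun q.1 (obf o q.2) v) (o u) then F q else 0)
        ≤ ∑ q : SimpleGraph (Fin n) × SimpleGraph (Fin m), F q := by
          apply Finset.sum_le_sum
          intro q _
          split_ifs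
          · exact le_rfl
          · positivity
      _ = 1 := by rw [← tsum_fintype (L := SummationFilter.unconditional _)]; exact F.tsum_coe
      _ < ⊤ := ENNReal.one_lt_top
  · have hstep : ∑ q : SimpleGraph (Fin n) × SimpleGraph (Fin m),
        (if k + 1 ≤ vnRank ((Psi o F (o u) hc).toFun q.1 (obf o q.2) v) (o u)
          then F q else 0)
        = ∑ q : SimpleGraph (Fin n) × SimpleGraph (Fin m),
          (if k ≤ rks (cls (obf o q.2)) (ckey o F (o u) q.1) (pcl (obf o q.2) (o u))
            then F q else 0) := by
      apply Finset.sum_congr rfl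
      intro q _
      have h1 : vnRank ((Psi o F (o u) hc).toFun q.1 (obf o q.2) v) (o u)
          = rks univ (key o F (o u) q.1 (obf o q.2)) (o u) + 1 := rfl
      rw [h1, rk_of_lead o F (o u) q.1 (obf o q.2) (isLead_ws o (o u) (obf o q.2))]
      exact if_congr Nat.add_le_add_iff_right rfl rfl
    rw [hstep]
    rw [Fintype.sum_prod_type, Fintype.sum_prod_type]
    apply Finset.sum_le_sum
    intro g₁ _
    rw [← Finset.sum_fiberwise univ (Quotient.mk (gs m))
      (fun g₂ => if k ≤ rks (cls (obf o g₂)) (ckey o F (o u) g₁) (pcl (obf o g₂) (o u))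
        then F (g₁, g₂) else 0)]
    rw [← Finset.sum_fiberwise univ (Quotient.mk (gs m))
      (fun g₂ => if k + 1 ≤ vnRank (Φ.toFun g₁ (obf o g₂) v) (o u) then F (g₁, g₂) else 0)]
    apply Finset.sum_le_sum
    intro γ _
    exact core o F g₁ Φ v u k γ

end VNOpt



/-- For any distribution `F` on pairs of graphs with core `C` (no asymmetry
assumption) and any vertex of interest `v* ∈ C`, for every obfuscating function `𝔬` there is a
vertex nomination scheme `Ψ` minimizing the level-`k` error simultaneously for every
`k ∈ {1,…,m−1}` and every competing scheme `Φ`. -/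
theorem bayes_optimal_scheme_exists_with_symmetries
    {n m c : ℕ} (hn : 1 ≤ n) (hm : 1 ≤ m) (hcn : c ≤ n) (hcm : c ≤ m)
    {W : Type} (hW : Nonempty (Fin m ≃ W))
    (F : PMF (SimpleGraph (Fin n) × SimpleGraph (Fin m)))
    (v : Fin n) (hv : (v : ℕ) < c) :
    ∀ o : Fin m ≃ W,
      ∃ Ψ : VN.VNScheme n m W,
        ∀ (k : ℕ), 1 ≤ k → k ≤ m - 1 →
          ∀ Φ : VN.VNScheme n m W,
            VN.vnError F Ψ o v ⟨(v : ℕ), lt_of_lt_of_le hv hcm⟩ k ≤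
              VN.vnError F Φ o v ⟨(v : ℕ), lt_of_lt_of_le hv hcm⟩ k := by
  intro o
  letI : Fintype W := Fintype.ofEquiv (Fin m) o
  have hc : Fintype.card W = m := by
    rw [← Fintype.card_fin m]
    exact Fintype.card_congr o.symm
  refine ⟨VNOpt.Psi o F (o ⟨(v : ℕ), lt_of_lt_of_le hv hcm⟩) hc, ?_⟩
  intro k _ _ Φ
  exact VNOpt.main_ineq o F v ⟨(v : ℕ), lt_of_lt_of_le hv hcm⟩ hc k Φ
end

section
/- Let (A,B) ∼ R-ER(P) on n vertices with R_{ij} > 0 and P_{ij} ∈ (0,1) for i ≠ j, and set ε := min_{i≠j} 2 R_{ij} P_{ij}(1 − P_{ij}). Let Q ∈ Π_n be a permutation matrix corresponding to a permutation π that moves exactly k points (i.e., has n − k fixed points), and let T be the number of 2-cycles (transpositions) in the cycle decomposition of π. Then E‖AQ − QB‖_F² − E‖A − B‖_F² ≥ ε( (n−k)k + k(k−1)/2 − T ). -/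
open Filter MeasureTheory ProbabilityTheory
open scoped ENNReal

namespace CorrER

/-- The permutation matrix of the permutation `π`. -/
def permMatrix {n : ℕ} (π : Equiv.Perm (Fin n)) : Matrix (Fin n) (Fin n) ℝ :=
  Matrix.of fun i j => if π j = i then (1 : ℝ) else 0

/-- Squared Frobenius norm of a matrix. -/
def frobSq {n : ℕ} (M : Matrix (Fin n) (Fin n) ℝ) : ℝ :=
  ∑ i, ∑ j, M i j ^ 2

/-- Frobenius norm of a matrix. -/
noncomputable def frob {n : ℕ} (M : Matrix (Fin n) (Fin n) ℝ) : ℝ :=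
  Real.sqrt (frobSq M)

/-- `δ(Q) = ‖A Q − Q B‖_F` for the permutation matrix `Q` of `π`. -/
noncomputable def gmDelta {n : ℕ} {Ω : Type*} (A B : Ω → Matrix (Fin n) (Fin n) ℝ)
    (π : Equiv.Perm (Fin n)) (ω : Ω) : ℝ :=
  frob (A ω * permMatrix π - permMatrix π * B ω)

/-- `(A, B) ∼ R-ER(P)`: a pair of random symmetric hollow 0–1 matrices such that the pairs of
edge indicators `(A_{ij}, B_{ij})` are mutually independent across unordered pairs `{i,j}`,
and for each `i < j` the indicators `A_{ij}` and `B_{ij}` are each `Bernoulli(P_{ij})`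
distributed with correlation `R_{ij}` (equivalently,
`E[A_{ij} B_{ij}] = P_{ij}² + R_{ij} P_{ij}(1 − P_{ij})`). -/
structure IsCorrER (n : ℕ) {Ω : Type*} [MeasurableSpace Ω] (μ : Measure Ω)
    (A B : Ω → Matrix (Fin n) (Fin n) ℝ) (P R : Matrix (Fin n) (Fin n) ℝ) : Prop where
  measA : ∀ i j, Measurable fun ω => A ω i j
  measB : ∀ i j, Measurable fun ω => B ω i j
  zeroOneA : ∀ ω i j, A ω i j = 0 ∨ A ω i j = 1
  zeroOneB : ∀ ω i j, B ω i j = 0 ∨ B ω i j = 1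
  symmA : ∀ ω i j, A ω i j = A ω j i
  symmB : ∀ ω i j, B ω i j = B ω j i
  hollowA : ∀ ω i, A ω i i = 0
  hollowB : ∀ ω i, B ω i i = 0
  symmP : ∀ i j, P i j = P j i
  symmR : ∀ i j, R i j = R j i
  memP : ∀ i j, P i j ∈ Set.Icc (0 : ℝ) 1
  memR : ∀ i j, R i j ∈ Set.Icc (-1 : ℝ) 1
  indep : iIndepFun
    (fun (p : {p : Fin n × Fin n // p.1 < p.2}) ω => (A ω p.1.1 p.1.2, B ω p.1.1 p.1.2)) μ
  margA : ∀ i j : Fin n, i < j → μ {ω | A ω i j = 1} = ENNReal.ofReal (P i j)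
  margB : ∀ i j : Fin n, i < j → μ {ω | B ω i j = 1} = ENNReal.ofReal (P i j)
  corr : ∀ i j : Fin n, i < j →
    ∫ ω, A ω i j * B ω i j ∂μ = P i j ^ 2 + R i j * P i j * (1 - P i j)

end CorrER

/-!
For 0–1 entries `(a - b)² = a + b - 2ab`, and reindexing by `π × π` does not change `∑ E[A_ij]`,
so the gap is `2 ∑_{i,j} (E[A_ij B_ij] - E[A_{πi,πj} B_ij])`. A summand vanishes unless `i ≠ j`
and `π` moves the edge `{i, j}`. For such a moved pair the edges `{πi, πj}` and `{i, j}` are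
distinct, so independence gives `E[A_{πi,πj} B_ij] = P_{πi,πj} P_ij`, while
`E[A_ij B_ij] = P_ij² + R_ij P_ij (1 - P_ij)`. As `π × π` permutes the moved pairs,
`∑ P_{πi,πj} P_ij ≤ ∑ P_ij²` by AM-GM, so the gap is at least `ε` times the number of moved
ordered pairs, which is `n(n-1) - (n-k)(n-k-1) - 2T = 2((n-k)k + k(k-1)/2 - T)`.
-/

open Finset

theorem Sym2.apply_eq_apply_of_mk_eq {α β : Type*} {M : α → α → β} (hM : ∀ i j, M i j = M j i)
    {a b i j : α} (h : s(a, b) = s(i, j)) : M a b = M i j := by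
  rcases Sym2.eq_iff.1 h with ⟨rfl, rfl⟩ | ⟨rfl, rfl⟩
  · rfl
  · exact hM _ _

theorem Sym2.exists_lt_mk_eq {α : Type*} [LinearOrder α] {i j : α} (h : i ≠ j) :
    ∃ a b, a < b ∧ s(a, b) = s(i, j) := by
  rcases h.lt_or_gt with hij | hji
  · exact ⟨i, j, hij, rfl⟩
  · exact ⟨j, i, hji, Sym2.eq_swap⟩

theorem Finset.sum_mul_comp_perm_le_sum_sq {ι R : Type*} [CommRing R] [LinearOrder R]
    [IsStrictOrderedRing R] (s : Finset ι) (σ : Equiv.Perm ι) (hs : ∀ x, x ∈ s ↔ σ x ∈ s)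
    (f : ι → R) : ∑ x ∈ s, f (σ x) * f x ≤ ∑ x ∈ s, f x ^ 2 := by
  have hσ : ∑ x ∈ s, f (σ x) ^ 2 = ∑ x ∈ s, f x ^ 2 :=
    sum_equiv σ (f := fun x => f (σ x) ^ 2) (g := fun x => f x ^ 2) hs fun _ _ => rfl
  have : ∑ x ∈ s, 2 * (f (σ x) * f x) ≤ ∑ x ∈ s, (f (σ x) ^ 2 + f x ^ 2) :=
    sum_le_sum fun x _ => by rw [← mul_assoc]; exact two_mul_le_add_sq _ _
  rw [← mul_sum, sum_add_distrib, hσ] at this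
  linarith

theorem Finset.card_filter_ne_eq_two_mul {α : Type*} [Fintype α] [LinearOrder α]
    (r : α → α → Prop) [DecidableRel r] (hr : ∀ a b, r a b → r b a) :
    #{p : α × α | p.1 ≠ p.2 ∧ r p.1 p.2} = 2 * #{p : α × α | p.1 < p.2 ∧ r p.1 p.2} := by
  have hsplit : univ.filter (fun p : α × α => p.1 ≠ p.2 ∧ r p.1 p.2) =
      univ.filter (fun p : α × α => p.1 < p.2 ∧ r p.1 p.2) ∪
        univ.filter (fun p : α × α => p.2 < p.1 ∧ r p.1 p.2) := by
    ext p
    simp only [mem_filter, mem_univ, true_and, mem_union, ne_iff_lt_or_gt]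
    tauto
  have hswap : #(univ.filter fun p : α × α => p.2 < p.1 ∧ r p.1 p.2) =
      #(univ.filter fun p : α × α => p.1 < p.2 ∧ r p.1 p.2) :=
    card_nbij' Prod.swap Prod.swap
      (fun p hp => by
        simp only [coe_filter, mem_univ, true_and, Set.mem_ofPred_eq] at hp ⊢
        exact ⟨hp.1, hr _ _ hp.2⟩)
      (fun p hp => by
        simp only [coe_filter, mem_univ, true_and, Set.mem_ofPred_eq] at hp ⊢
        exact ⟨hp.1, hr _ _ hp.2⟩)
      (fun _ _ => rfl) (fun _ _ => rfl)
  rw [hsplit, card_union_of_disjoint, hswap, two_mul]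
  exact disjoint_filter.2 fun p _ h1 h2 => lt_asymm h1.1 h2.1

namespace Equiv.Perm

variable {α : Type*} [Fintype α]

def movedPairs [DecidableEq α] (π : Perm α) : Finset (α × α) :=
  {p | p.1 ≠ p.2 ∧ s(π p.1, π p.2) ≠ s(p.1, p.2)}

theorem mem_movedPairs [DecidableEq α] {π : Perm α} {p : α × α} :
    p ∈ π.movedPairs ↔ p.1 ≠ p.2 ∧ s(π p.1, π p.2) ≠ s(p.1, p.2) := by
  simp [movedPairs]

theorem mem_movedPairs_iff_prodMap_mem [DecidableEq α] (π : Perm α) (p : α × α) :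
    p ∈ π.movedPairs ↔ Prod.map π π p ∈ π.movedPairs := by
  have hmap := (Sym2.map.injective π.injective).eq_iff (a := s(π p.1, π p.2)) (b := s(p.1, p.2))
  simp only [Sym2.map_mk] at hmap
  simp only [mem_movedPairs, Prod.map_fst, Prod.map_snd, ne_eq, π.injective.eq_iff, hmap]

theorem card_movedPairs_add [LinearOrder α] (π : Perm α) :
    #π.movedPairs + #({i | π i = i} : Finset α).offDiag +
        2 * #{p : α × α | p.1 < p.2 ∧ π p.1 = p.2 ∧ π p.2 = p.1} =
      #(univ : Finset α).offDiag := by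
  have hfix : ({i | π i = i} : Finset α).offDiag =
      univ.filter fun p : α × α => p.1 ≠ p.2 ∧ (π p.1 = p.1 ∧ π p.2 = p.2) := by
    ext p
    simp only [mem_offDiag, mem_filter, mem_univ, true_and]
    tauto
  have hrest : univ.offDiag.filter (fun p : α × α => ¬(s(π p.1, π p.2) ≠ s(p.1, p.2))) =
      univ.filter (fun p : α × α => p.1 ≠ p.2 ∧ (π p.1 = p.1 ∧ π p.2 = p.2)) ∪
        univ.filter (fun p : α × α => p.1 ≠ p.2 ∧ (π p.1 = p.2 ∧ π p.2 = p.1)) := by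
    ext p
    simp only [mem_offDiag, mem_filter, mem_univ, true_and, mem_union, ne_eq, not_not,
      Sym2.eq_iff]
    tauto
  have hmoved : π.movedPairs =
      univ.offDiag.filter fun p : α × α => s(π p.1, π p.2) ≠ s(p.1, p.2) := by
    ext p
    simp [mem_movedPairs]
  have hdisj : _root_.Disjoint
      (univ.filter fun p : α × α => p.1 ≠ p.2 ∧ (π p.1 = p.1 ∧ π p.2 = p.2))
      (univ.filter fun p : α × α => p.1 ≠ p.2 ∧ (π p.1 = p.2 ∧ π p.2 = p.1)) :=
    disjoint_filter.2 fun p _ h1 h2 => h1.1 (h1.2.1.symm.trans h2.2.1)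
  rw [hfix, ← card_filter_ne_eq_two_mul (fun a b : α => π a = b ∧ π b = a) fun a b h => h.symm,
    add_assoc, ← card_union_of_disjoint hdisj, ← hrest, hmoved]
  exact card_filter_add_card_filter_not _

theorem card_movedPairs_eq [LinearOrder α] (π : Perm α) {k T : ℕ}
    (hk : #{i | π i ≠ i} = k) (hT : #{p : α × α | p.1 < p.2 ∧ π p.1 = p.2 ∧ π p.2 = p.1} = T) :
    (#π.movedPairs : ℝ) = 2 * ((Fintype.card α - k) * k + k * (k - 1) / 2 - T) := by
  have hsplit := card_movedPairs_add π
  have hfix : #{i | π i = i} + k = Fintype.card α := hk ▸ card_filter_add_card_filter_not _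
  rw [offDiag_card, offDiag_card, card_univ, hT, ← hfix] at hsplit
  have hcast := congrArg (Nat.cast : ℕ → ℝ) hsplit
  push_cast [Nat.cast_sub (Nat.le_mul_self _)] at hcast
  rw [← hfix]
  push_cast
  linarith

end Equiv.Perm

theorem IsIdempotentElem.sub_sq {R : Type*} [CommRing R] {x y : R} (hx : IsIdempotentElem x)
    (hy : IsIdempotentElem y) : (x - y) ^ 2 = x + y - 2 * (x * y) := by
  linear_combination hx.eq + hy.eq

section ZeroOne

variable {Ω : Type*} [MeasurableSpace Ω] {μ : Measure Ω} {f : Ω → ℝ}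

theorem MeasureTheory.integrable_of_forall_eq_zero_or_one [IsFiniteMeasure μ]
    (hf : Measurable f) (h01 : ∀ ω, f ω = 0 ∨ f ω = 1) : Integrable f μ :=
  .of_bound hf.aestronglyMeasurable 1 <| .of_forall fun ω => by
    rcases h01 ω with h | h <;> simp [h]

theorem MeasureTheory.integral_eq_measureReal_of_forall_eq_zero_or_one (hf : Measurable f)
    (h01 : ∀ ω, f ω = 0 ∨ f ω = 1) : ∫ ω, f ω ∂μ = μ.real {ω | f ω = 1} := by
  have hind : f = {ω | f ω = 1}.indicator 1 := by
    ext ω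
    rcases h01 ω with h | h <;> simp [Set.indicator, h]
  conv_lhs => rw [hind]
  exact integral_indicator_one (hf (measurableSet_singleton 1))

end ZeroOne

namespace CorrER

variable {n : ℕ}

theorem frobSq_eq_sum (M : Matrix (Fin n) (Fin n) ℝ) :
    frobSq M = ∑ p : Fin n × Fin n, M p.1 p.2 ^ 2 := by
  rw [frobSq, Fintype.sum_prod_type]

theorem mul_permMatrix_apply (M : Matrix (Fin n) (Fin n) ℝ) (π : Equiv.Perm (Fin n))
    (i j : Fin n) : (M * permMatrix π) i j = M i (π j) := by
  simp [Matrix.mul_apply, permMatrix, eq_comm]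

theorem permMatrix_mul_apply (π : Equiv.Perm (Fin n)) (N : Matrix (Fin n) (Fin n) ℝ)
    (i j : Fin n) : (permMatrix π * N) i j = N (π.symm i) j := by
  simp [Matrix.mul_apply, permMatrix, ← Equiv.eq_symm_apply]

theorem frobSq_mul_permMatrix_sub_permMatrix_mul (M N : Matrix (Fin n) (Fin n) ℝ)
    (π : Equiv.Perm (Fin n)) :
    frobSq (M * permMatrix π - permMatrix π * N) =
      ∑ p : Fin n × Fin n, (M (π p.1) (π p.2) - N p.1 p.2) ^ 2 := by
  rw [frobSq_eq_sum, ← (Equiv.prodCongr π (Equiv.refl _)).sum_comp]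
  simp [mul_permMatrix_apply, permMatrix_mul_apply]

end CorrER

namespace CorrER.IsCorrER

variable {n : ℕ} {Ω : Type*} [MeasurableSpace Ω] {μ : Measure Ω}
  {A B : Ω → Matrix (Fin n) (Fin n) ℝ} {P R : Matrix (Fin n) (Fin n) ℝ}
  (h : IsCorrER n μ A B P R)
include h

theorem integrable_A [IsFiniteMeasure μ] (i j : Fin n) : Integrable (fun ω => A ω i j) μ :=
  integrable_of_forall_eq_zero_or_one (h.measA i j) (h.zeroOneA · i j)

theorem integrable_B [IsFiniteMeasure μ] (i j : Fin n) : Integrable (fun ω => B ω i j) μ :=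
  integrable_of_forall_eq_zero_or_one (h.measB i j) (h.zeroOneB · i j)

theorem integrable_A_mul_B [IsFiniteMeasure μ] (a b i j : Fin n) :
    Integrable (fun ω => A ω a b * B ω i j) μ :=
  integrable_of_forall_eq_zero_or_one ((h.measA a b).mul (h.measB i j)) fun ω => by
    rcases h.zeroOneA ω a b with hA | hA <;> simp [hA, h.zeroOneB ω i j]

theorem integral_A {i j : Fin n} (hij : i ≠ j) : ∫ ω, A ω i j ∂μ = P i j := by
  obtain ⟨a, b, hab, hs⟩ := Sym2.exists_lt_mk_eq hij
  simp_rw [← Sym2.apply_eq_apply_of_mk_eq (h.symmA _) hs,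
    ← Sym2.apply_eq_apply_of_mk_eq h.symmP hs]
  rw [integral_eq_measureReal_of_forall_eq_zero_or_one (h.measA a b) (h.zeroOneA · a b),
    measureReal_def, h.margA a b hab, ENNReal.toReal_ofReal (h.memP a b).1]

theorem integral_B {i j : Fin n} (hij : i ≠ j) : ∫ ω, B ω i j ∂μ = P i j := by
  obtain ⟨a, b, hab, hs⟩ := Sym2.exists_lt_mk_eq hij
  simp_rw [← Sym2.apply_eq_apply_of_mk_eq (h.symmB _) hs,
    ← Sym2.apply_eq_apply_of_mk_eq h.symmP hs]
  rw [integral_eq_measureReal_of_forall_eq_zero_or_one (h.measB a b) (h.zeroOneB · a b),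
    measureReal_def, h.margB a b hab, ENNReal.toReal_ofReal (h.memP a b).1]

theorem integral_A_mul_B {i j : Fin n} (hij : i ≠ j) :
    ∫ ω, A ω i j * B ω i j ∂μ = P i j ^ 2 + R i j * P i j * (1 - P i j) := by
  obtain ⟨a, b, hab, hs⟩ := Sym2.exists_lt_mk_eq hij
  simp_rw [← Sym2.apply_eq_apply_of_mk_eq (h.symmA _) hs,
    ← Sym2.apply_eq_apply_of_mk_eq (h.symmB _) hs, ← Sym2.apply_eq_apply_of_mk_eq h.symmP hs,
    ← Sym2.apply_eq_apply_of_mk_eq h.symmR hs]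
  exact h.corr a b hab

theorem integral_A_mul_B_of_mk_ne [IsProbabilityMeasure μ] {a b i j : Fin n} (hab : a ≠ b)
    (hij : i ≠ j) (hne : s(a, b) ≠ s(i, j)) :
    ∫ ω, A ω a b * B ω i j ∂μ = P a b * P i j := by
  obtain ⟨a', b', hab', hs⟩ := Sym2.exists_lt_mk_eq hab
  obtain ⟨i', j', hij', ht⟩ := Sym2.exists_lt_mk_eq hij
  simp_rw [← Sym2.apply_eq_apply_of_mk_eq (h.symmA _) hs,
    ← Sym2.apply_eq_apply_of_mk_eq (h.symmB _) ht, ← Sym2.apply_eq_apply_of_mk_eq h.symmP hs,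
    ← Sym2.apply_eq_apply_of_mk_eq h.symmP ht]
  have hpairs : (⟨(a', b'), hab'⟩ : {p : Fin n × Fin n // p.1 < p.2}) ≠ ⟨(i', j'), hij'⟩ :=
    fun he => by
      obtain ⟨rfl, rfl⟩ := Prod.mk.inj (Subtype.mk.inj he)
      exact hne (hs.symm.trans ht)
  have hindep : IndepFun (fun ω => A ω a' b') (fun ω => B ω i' j') μ :=
    (h.indep.indepFun hpairs).comp measurable_fst measurable_snd
  rw [hindep.integral_fun_mul_eq_mul_integral (h.integrable_A a' b').aestronglyMeasurable
    (h.integrable_B i' j').aestronglyMeasurable, h.integral_A hab'.ne, h.integral_B hij'.ne]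

theorem integral_sum_sq_sub [IsFiniteMeasure μ] (π : Equiv.Perm (Fin n)) :
    ∫ ω, ∑ p : Fin n × Fin n, (A ω (π p.1) (π p.2) - B ω p.1 p.2) ^ 2 ∂μ =
      ∑ p : Fin n × Fin n, ∫ ω, A ω p.1 p.2 ∂μ + ∑ p : Fin n × Fin n, ∫ ω, B ω p.1 p.2 ∂μ -
        2 * ∑ p : Fin n × Fin n, ∫ ω, A ω (π p.1) (π p.2) * B ω p.1 p.2 ∂μ := by
  have hsq : ∀ ω (p : Fin n × Fin n), (A ω (π p.1) (π p.2) - B ω p.1 p.2) ^ 2 =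
      A ω (π p.1) (π p.2) + B ω p.1 p.2 - 2 * (A ω (π p.1) (π p.2) * B ω p.1 p.2) :=
    fun ω p => IsIdempotentElem.sub_sq (IsIdempotentElem.iff_eq_zero_or_one.2 (h.zeroOneA ..))
      (IsIdempotentElem.iff_eq_zero_or_one.2 (h.zeroOneB ..))
  have hint : ∀ p : Fin n × Fin n, Integrable (fun ω =>
      A ω (π p.1) (π p.2) + B ω p.1 p.2 - 2 * (A ω (π p.1) (π p.2) * B ω p.1 p.2)) μ :=
    fun p => ((h.integrable_A ..).add (h.integrable_B ..)).sub
      ((h.integrable_A_mul_B ..).const_mul 2)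
  have hterm : ∀ p : Fin n × Fin n,
      ∫ ω, (A ω (π p.1) (π p.2) + B ω p.1 p.2 - 2 * (A ω (π p.1) (π p.2) * B ω p.1 p.2)) ∂μ =
        ∫ ω, A ω (π p.1) (π p.2) ∂μ + ∫ ω, B ω p.1 p.2 ∂μ -
          2 * ∫ ω, A ω (π p.1) (π p.2) * B ω p.1 p.2 ∂μ := fun p => by
    rw [integral_sub (f := fun ω => A ω (π p.1) (π p.2) + B ω p.1 p.2)
      ((h.integrable_A ..).add (h.integrable_B ..)) ((h.integrable_A_mul_B ..).const_mul 2),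
      integral_add (h.integrable_A ..) (h.integrable_B ..), integral_const_mul]
  have hreindex : ∑ p : Fin n × Fin n, ∫ ω, A ω (π p.1) (π p.2) ∂μ =
      ∑ p : Fin n × Fin n, ∫ ω, A ω p.1 p.2 ∂μ :=
    Fintype.sum_equiv (Equiv.prodCongr π π) _ _ fun _ => rfl
  simp_rw [hsq]
  rw [integral_finsetSum _ fun p _ => hint p]
  simp_rw [hterm]
  rw [sum_sub_distrib, sum_add_distrib, mul_sum, hreindex]

theorem integral_frobSq_gap_eq_two_mul_sum [IsFiniteMeasure μ] (π : Equiv.Perm (Fin n)) :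
    ∫ ω, frobSq (A ω * permMatrix π - permMatrix π * B ω) ∂μ - ∫ ω, frobSq (A ω - B ω) ∂μ =
      2 * ∑ p : Fin n × Fin n, (∫ ω, A ω p.1 p.2 * B ω p.1 p.2 ∂μ -
        ∫ ω, A ω (π p.1) (π p.2) * B ω p.1 p.2 ∂μ) := by
  have hid := h.integral_sum_sq_sub 1
  simp only [Equiv.Perm.one_apply] at hid
  simp_rw [frobSq_mul_permMatrix_sub_permMatrix_mul, frobSq_eq_sum, Matrix.sub_apply]
  rw [h.integral_sum_sq_sub π, hid, sum_sub_distrib]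
  ring

theorem integral_A_comp_mul_B_of_notMem_movedPairs (π : Equiv.Perm (Fin n))
    {p : Fin n × Fin n} (hp : p ∉ π.movedPairs) :
    ∫ ω, A ω (π p.1) (π p.2) * B ω p.1 p.2 ∂μ = ∫ ω, A ω p.1 p.2 * B ω p.1 p.2 ∂μ := by
  rw [Equiv.Perm.mem_movedPairs, not_and_or, not_not, not_not] at hp
  rcases hp with hdiag | hfix
  · simp [← hdiag, h.hollowB]
  · simp_rw [Sym2.apply_eq_apply_of_mk_eq (h.symmA _) hfix]

theorem integral_frobSq_gap_eq_sum_movedPairs [IsProbabilityMeasure μ]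
    (π : Equiv.Perm (Fin n)) :
    ∫ ω, frobSq (A ω * permMatrix π - permMatrix π * B ω) ∂μ - ∫ ω, frobSq (A ω - B ω) ∂μ =
      ∑ p ∈ π.movedPairs, 2 * (P p.1 p.2 ^ 2 - P (π p.1) (π p.2) * P p.1 p.2 +
        R p.1 p.2 * P p.1 p.2 * (1 - P p.1 p.2)) := by
  rw [h.integral_frobSq_gap_eq_two_mul_sum, mul_sum, ← sum_subset (subset_univ π.movedPairs)
    fun p _ hp => by rw [h.integral_A_comp_mul_B_of_notMem_movedPairs π hp, sub_self, mul_zero]]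
  refine sum_congr rfl fun p hp => ?_
  rw [Equiv.Perm.mem_movedPairs] at hp
  rw [h.integral_A_mul_B hp.1, h.integral_A_mul_B_of_mk_ne (π.injective.ne hp.1) hp.1 hp.2]
  ring

theorem sum_movedPairs_le_integral_frobSq_gap [IsProbabilityMeasure μ]
    (π : Equiv.Perm (Fin n)) :
    ∑ p ∈ π.movedPairs, 2 * R p.1 p.2 * P p.1 p.2 * (1 - P p.1 p.2) ≤
      ∫ ω, frobSq (A ω * permMatrix π - permMatrix π * B ω) ∂μ - ∫ ω, frobSq (A ω - B ω) ∂μ := by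
  have hP := sum_mul_comp_perm_le_sum_sq π.movedPairs (Equiv.prodCongr π π)
    π.mem_movedPairs_iff_prodMap_mem fun p => P p.1 p.2
  simp only [Equiv.prodCongr_apply, Prod.map_fst, Prod.map_snd] at hP
  have hsplit : ∑ p ∈ π.movedPairs, 2 * (P p.1 p.2 ^ 2 - P (π p.1) (π p.2) * P p.1 p.2 +
        R p.1 p.2 * P p.1 p.2 * (1 - P p.1 p.2)) =
      ∑ p ∈ π.movedPairs, 2 * R p.1 p.2 * P p.1 p.2 * (1 - P p.1 p.2) +
        2 * (∑ p ∈ π.movedPairs, P p.1 p.2 ^ 2 -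
          ∑ p ∈ π.movedPairs, P (π p.1) (π p.2) * P p.1 p.2) := by
    rw [mul_sub, mul_sum, mul_sum, ← sum_sub_distrib, ← sum_add_distrib]
    exact sum_congr rfl fun _ _ => by ring
  rw [h.integral_frobSq_gap_eq_sum_movedPairs, hsplit]
  linarith

end CorrER.IsCorrER

/-- Let `(A,B) ∼ R-ER(P)` on `n` vertices with `R_{ij} > 0` and
`P_{ij} ∈ (0,1)` for `i ≠ j`, and `ε := min_{i≠j} 2 R_{ij} P_{ij}(1 − P_{ij})`. If `Q` is the
permutation matrix of a permutation `π` moving exactly `k` points, and `T` is the number of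
2-cycles of `π`, then `E‖AQ − QB‖_F² − E‖A − B‖_F² ≥ ε((n−k)k + k(k−1)/2 − T)`. -/
theorem expected_delta_gap
    (n : ℕ) {Ω : Type} [MeasurableSpace Ω] (μ : Measure Ω) [IsProbabilityMeasure μ]
    (A B : Ω → Matrix (Fin n) (Fin n) ℝ) (P R : Matrix (Fin n) (Fin n) ℝ)
    (hmodel : CorrER.IsCorrER n μ A B P R)
    (hR : ∀ i j : Fin n, i ≠ j → 0 < R i j)
    (hP : ∀ i j : Fin n, i ≠ j → P i j ∈ Set.Ioo (0 : ℝ) 1)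
    (ε : ℝ)
    (hε : (∀ i j : Fin n, i ≠ j → ε ≤ 2 * R i j * P i j * (1 - P i j)) ∧
      ∃ i j : Fin n, i ≠ j ∧ ε = 2 * R i j * P i j * (1 - P i j))
    (π : Equiv.Perm (Fin n)) (k T : ℕ)
    (hk : k = (Finset.univ.filter fun i : Fin n => π i ≠ i).card)
    (hT : T = (Finset.univ.filter fun p : Fin n × Fin n =>
      p.1 < p.2 ∧ π p.1 = p.2 ∧ π p.2 = p.1).card) :
    (∫ ω, CorrER.frobSq (A ω * CorrER.permMatrix π - CorrER.permMatrix π * B ω) ∂μ) -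
        (∫ ω, CorrER.frobSq (A ω - B ω) ∂μ) ≥
      ε * (((n : ℝ) - k) * k + (k : ℝ) * ((k : ℝ) - 1) / 2 - T) := by
  have hε_nonneg : 0 ≤ ε := by
    obtain ⟨i, j, hij, rfl⟩ := hε.2
    exact (mul_pos (mul_pos (mul_pos two_pos (hR i j hij)) (hP i j hij).1)
      (sub_pos.2 (hP i j hij).2)).le
  have hcard := π.card_movedPairs_eq hk.symm hT.symm
  rw [Fintype.card_fin] at hcard
  have hcorr : (#π.movedPairs : ℝ) * ε ≤
      ∑ p ∈ π.movedPairs, 2 * R p.1 p.2 * P p.1 p.2 * (1 - P p.1 p.2) := by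
    simpa using card_nsmul_le_sum _ _ ε fun p hp => hε.1 _ _ (Equiv.Perm.mem_movedPairs.1 hp).1
  have hcount_nonneg : 0 ≤ ((n : ℝ) - k) * k + (k : ℝ) * ((k : ℝ) - 1) / 2 - T := by
    linarith [(#π.movedPairs).cast_nonneg (α := ℝ)]
  calc ε * (((n : ℝ) - k) * k + (k : ℝ) * ((k : ℝ) - 1) / 2 - T)
      ≤ (#π.movedPairs : ℝ) * ε := by rw [hcard]; linarith [mul_nonneg hε_nonneg hcount_nonneg]
    _ ≤ _ := hcorr
    _ ≤ _ := hmodel.sum_movedPairs_le_integral_frobSq_gap π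
end

section
/- Fix p₁, p₂, q ∈ [0,1] with p₁ ≠ p₂ and q ∉ {p₁, p₂}, and for even n let G₁ and G₂ be independent asym-SBM(2,B,b) graphs on [n] with B = [[p₁,q],[q,p₂]] and block membership b(i) = 1 for i ≤ n/2, b(i) = 2 for i > n/2. Then for any vertex nomination scheme Φ, any two vertices u, v of G₂ lying in the same block (b(u) = b(v)), and any k ∈ [n]: P( rank_{Φ(G₁,𝔬(G₂),v₁)}(𝔬(u)) = k ) = P( rank_{Φ(G₁,𝔬(G₂),v₁)}(𝔬(v)) = k ); consequently, summing over k, the common block-1 value α_{k,n} and block-2 value β_{k,n} satisfy (n/2)(α_{k,n} + β_{k,n}) = 1 for every k. -/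
open Filter MeasureTheory
open scoped ENNReal

namespace VN

open scoped Classical in
/-- The probability that an edge-independent random graph on `Fin N`, with edge `{i,j}`
present independently with probability `β i j`, equals the graph `g`. -/
noncomputable def graphProb (N : ℕ) (β : Fin N → Fin N → ℝ) (g : SimpleGraph (Fin N)) : ℝ :=
  ∏ q ∈ Finset.univ.filter (fun q : Fin N × Fin N => q.1 < q.2),
    (if g.Adj q.1 q.2 then β q.1 q.2 else 1 - β q.1 q.2)

open scoped Classical in
/-- `F` is the distribution of a pair of independent edge-independent random graphs with
edge-probability functions `β₁`, `β₂`, each conditioned on being asymmetric: `F` is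
proportional to the independent product restricted to pairs of asymmetric graphs. -/
def IsAsymPair (N : ℕ) (F : PMF (SimpleGraph (Fin N) × SimpleGraph (Fin N)))
    (β₁ β₂ : Fin N → Fin N → ℝ) : Prop :=
  ∃ Z : ℝ, 0 < Z ∧ ∀ g₁ g₂ : SimpleGraph (Fin N), F (g₁, g₂) =
    ENNReal.ofReal (Z * (if IsAsym g₁ ∧ IsAsym g₂ then
      graphProb N β₁ g₁ * graphProb N β₂ g₂ else 0))

/-- The edge-probability function of the two-block stochastic block model `SBM(2, B, b)` on
`2M` vertices with `B = [[p₁, q], [q, p₂]]`, where block 1 consists of the first `M` vertices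
and block 2 of the remaining `M` vertices. -/
def sbmBeta (M : ℕ) (p₁ p₂ q : ℝ) (i j : Fin (2 * M)) : ℝ :=
  if (i : ℕ) < M then (if (j : ℕ) < M then p₁ else q)
  else (if (j : ℕ) < M then q else p₂)

end VN


namespace VN
/-- sort a pair -/
def sortp {N : ℕ} (q : Fin N × Fin N) : Fin N × Fin N := if q.1 < q.2 then q else (q.2, q.1)

lemma graphProb_map {N : ℕ} (β : Fin N → Fin N → ℝ) (hsym : ∀ i j, β i j = β j i)
    (π : Fin N ≃ Fin N) (hπ : ∀ i j, β (π i) (π j) = β i j) (g : SimpleGraph (Fin N)) :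
    graphProb N β (g.map π.toEmbedding) = graphProb N β g := by
  classical
  unfold graphProb
  symm
  refine Finset.prod_nbij' (fun q => sortp (π q.1, π q.2)) (fun q => sortp (π.symm q.1, π.symm q.2))
    ?_ ?_ ?_ ?_ ?_
  · rintro ⟨a, b⟩ hq
    simp only [Finset.mem_filter, Finset.mem_univ, true_and] at hq ⊢
    unfold sortp
    rcases lt_trichotomy (π a) (π b) with h | h | h
    · simpa [h]
    · exact absurd (π.injective h) (ne_of_lt hq)
    · simpa [not_lt.mpr h.le, h]
  · rintro ⟨a, b⟩ hq
    simp only [Finset.mem_filter, Finset.mem_univ, true_and] at hq ⊢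
    unfold sortp
    rcases lt_trichotomy (π.symm a) (π.symm b) with h | h | h
    · simpa [h]
    · exact absurd (π.symm.injective h) (ne_of_lt hq)
    · simpa [not_lt.mpr h.le, h]
  · rintro ⟨a, b⟩ hq
    simp only [Finset.mem_filter, Finset.mem_univ, true_and] at hq
    unfold sortp
    by_cases h : π a < π b
    · simp [h, not_lt.mpr hq.le, hq]
    · simp [h, not_lt.mpr hq.le, hq]
  · rintro ⟨a, b⟩ hq
    simp only [Finset.mem_filter, Finset.mem_univ, true_and] at hq
    unfold sortp
    by_cases h : π.symm a < π.symm b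
    · simp [h, not_lt.mpr hq.le, hq]
    · simp [h, not_lt.mpr hq.le, hq]
  · rintro ⟨a, b⟩ hq
    simp only [Finset.mem_filter, Finset.mem_univ, true_and] at hq
    unfold sortp
    by_cases h : π a < π b
    · have h1 : (SimpleGraph.map π.toEmbedding g).Adj (π a) (π b) ↔ g.Adj a b :=
        SimpleGraph.map_adj_apply
      simp only [h, if_pos, h1, hπ]
    · have h1 : (SimpleGraph.map π.toEmbedding g).Adj (π b) (π a) ↔ g.Adj b a :=
        SimpleGraph.map_adj_apply
      simp only [h, if_neg, not_false_iff, h1, hπ, hsym b a, g.adj_comm a b]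

/-- the iso `g ≃g g.map π.toEmbedding` given by `π`. -/
def mapIso {N : ℕ} (π : Fin N ≃ Fin N) (g : SimpleGraph (Fin N)) :
    g ≃g g.map π.toEmbedding :=
  ⟨π, SimpleGraph.map_adj_apply⟩

@[simp] lemma mapIso_apply {N : ℕ} (π : Fin N ≃ Fin N) (g : SimpleGraph (Fin N)) (x : Fin N) :
    mapIso π g x = π x := rfl

@[simp] lemma mapIso_symm_apply {N : ℕ} (π : Fin N ≃ Fin N) (g : SimpleGraph (Fin N))
    (x : Fin N) : (mapIso π g).symm x = π.symm x := rfl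

lemma isAsym_map_of {N : ℕ} (π : Fin N ≃ Fin N) {g : SimpleGraph (Fin N)}
    (h : IsAsym g) : IsAsym (g.map π.toEmbedding) := by
  intro σ v
  have hτ := h (((mapIso π g).trans σ).trans (mapIso π g).symm) (π.symm v)
  simp only [RelIso.trans_apply, mapIso_apply, mapIso_symm_apply,
    Equiv.apply_symm_apply] at hτ
  have := congrArg π hτ
  simpa using this

lemma isAsym_map_iff {N : ℕ} (π : Fin N ≃ Fin N) (g : SimpleGraph (Fin N)) :
    IsAsym (g.map π.toEmbedding) ↔ IsAsym g := by
  constructor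
  · intro h σ v
    have hτ := h (((mapIso π g).symm.trans σ).trans (mapIso π g)) (π v)
    simp only [RelIso.trans_apply, mapIso_apply, mapIso_symm_apply,
      Equiv.symm_apply_apply] at hτ
    exact π.injective hτ
  · exact isAsym_map_of π

lemma inOrbit_iff_of_asym {V : Type*} {g : SimpleGraph V} (h : IsAsym g) (u w : V) :
    InOrbit g u w ↔ w = u := by
  constructor
  · rintro ⟨σ, rfl⟩; exact h σ u
  · rintro rfl; exact ⟨SimpleGraph.Iso.refl, rfl⟩

/-- the equiv on graphs induced by a vertex permutation -/
def gEquiv {N : ℕ} (π : Fin N ≃ Fin N) :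
    SimpleGraph (Fin N) ≃ SimpleGraph (Fin N) where
  toFun g := g.map π.toEmbedding
  invFun g := g.map π.symm.toEmbedding
  left_inv g := by
    show (g.map π.toEmbedding).map π.symm.toEmbedding = g
    rw [SimpleGraph.map_map]
    have : π.toEmbedding.trans π.symm.toEmbedding = Function.Embedding.refl _ := by
      ext x; simp
    simp
  right_inv g := by
    show (g.map π.symm.toEmbedding).map π.toEmbedding = g
    rw [SimpleGraph.map_map]
    have : π.symm.toEmbedding.trans π.toEmbedding = Function.Embedding.refl _ := by
      ext x; simp
    simp

@[simp] lemma gEquiv_apply {N : ℕ} (π : Fin N ≃ Fin N) (g : SimpleGraph (Fin N)) :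
    gEquiv π g = g.map π.toEmbedding := rfl


lemma obf_trans {m : ℕ} {W : Type*} (π : Fin m ≃ Fin m) (o : Fin m ≃ W)
    (g : SimpleGraph (Fin m)) : obf (π.trans o) g = obf o (g.map π.toEmbedding) := by
  unfold obf
  rw [SimpleGraph.map_map]
  rfl

end VN

/-- Fix `p₁ ≠ p₂`, `q ∉ {p₁, p₂}` in `[0,1]`, an even graph order `n = 2M`,
and let `(G₁,G₂)` be independent `asym-SBM(2,B,b)` graphs with `B = [[p₁,q],[q,p₂]]`. Then for
any vertex nomination scheme `Φ`, any two vertices `u, v` of `G₂` in the same block, and any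
rank value `k ∈ [n]`, `P(rank(𝔬(u)) = k) = P(rank(𝔬(v)) = k)`; consequently the common
block-1 value `α_k` and block-2 value `β_k` satisfy `(n/2)(α_k + β_k) = 1`. -/
theorem same_block_same_rank_distribution
    (p₁ p₂ q : ℝ) (hp₁ : p₁ ∈ Set.Icc (0 : ℝ) 1) (hp₂ : p₂ ∈ Set.Icc (0 : ℝ) 1)
    (hq : q ∈ Set.Icc (0 : ℝ) 1) (hpne : p₁ ≠ p₂) (hq₁ : q ≠ p₁) (hq₂ : q ≠ p₂)
    (M : ℕ) (hM : 1 ≤ M)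
    {W : Type} (hW : Nonempty (Fin (2 * M) ≃ W))
    (F : PMF (SimpleGraph (Fin (2 * M)) × SimpleGraph (Fin (2 * M))))
    (hF : VN.IsAsymPair (2 * M) F (VN.sbmBeta M p₁ p₂ q) (VN.sbmBeta M p₁ p₂ q))
    (Φ : VN.VNScheme (2 * M) (2 * M) W) (o : Fin (2 * M) ≃ W) :
    (∀ u v : Fin (2 * M), ((u : ℕ) < M ↔ (v : ℕ) < M) →
      ∀ k : ℕ, 1 ≤ k → k ≤ 2 * M →
        F.toOuterMeasure
            {pr | VN.vnRank (Φ.toFun pr.1 (VN.obf o pr.2) ⟨0, by omega⟩) (o u) = k} =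
          F.toOuterMeasure
            {pr | VN.vnRank (Φ.toFun pr.1 (VN.obf o pr.2) ⟨0, by omega⟩) (o v) = k}) ∧
    (∀ u₁ u₂ : Fin (2 * M), (u₁ : ℕ) < M → M ≤ (u₂ : ℕ) →
      ∀ k : ℕ, 1 ≤ k → k ≤ 2 * M →
        (M : ℝ) *
          ((F.toOuterMeasure
              {pr | VN.vnRank (Φ.toFun pr.1 (VN.obf o pr.2) ⟨0, by omega⟩) (o u₁) = k}).toReal +
            (F.toOuterMeasure
              {pr | VN.vnRank (Φ.toFun pr.1 (VN.obf o pr.2) ⟨0, by omega⟩) (o u₂) = k}).toReal) =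
          1) := by
  classical
  obtain ⟨Z, hZ, hFeq⟩ := hF
  have βsym : ∀ i j, VN.sbmBeta M p₁ p₂ q i j = VN.sbmBeta M p₁ p₂ q j i := by
    intro i j; unfold VN.sbmBeta; split_ifs <;> rfl
  -- invariance of F under block-preserving relabelings of the second graph
  have hFinv : ∀ (π : Fin (2*M) ≃ Fin (2*M)), (∀ i, ((π i : ℕ) < M ↔ (i:ℕ) < M)) →
      ∀ g₁ g₂, F (g₁, g₂.map π.toEmbedding) = F (g₁, g₂) := by
    intro π hπ g₁ g₂
    have hβ : ∀ i j, VN.sbmBeta M p₁ p₂ q (π i) (π j) = VN.sbmBeta M p₁ p₂ q i j := by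
      intro i j; unfold VN.sbmBeta; simp only [hπ]
    rw [hFeq, hFeq, VN.graphProb_map _ βsym π hβ, VN.isAsym_map_iff]
  have hsupp : ∀ g₁ g₂, F (g₁, g₂) ≠ 0 → VN.IsAsym g₂ := by
    intro g₁ g₂ h
    by_contra hc
    apply h
    rw [hFeq, if_neg (by tauto)]
    simp
  have hle1 : ∀ s, F.toOuterMeasure s ≤ 1 := by
    intro s
    rw [PMF.toOuterMeasure_apply, ← PMF.tsum_coe F]
    exact ENNReal.tsum_le_tsum (fun x => Set.indicator_le_self s (⇑F) x)
  set v0 : Fin (2 * M) := ⟨0, by omega⟩ with hv0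
  -- Part 1 (for all k)
  have key : ∀ u v : Fin (2*M), ((u:ℕ) < M ↔ (v:ℕ) < M) → ∀ k : ℕ,
      F.toOuterMeasure {pr | VN.vnRank (Φ.toFun pr.1 (VN.obf o pr.2) v0) (o u) = k}
        = F.toOuterMeasure {pr | VN.vnRank (Φ.toFun pr.1 (VN.obf o pr.2) v0) (o v) = k} := by
    intro u v huv k
    set π := Equiv.swap u v with hπdef
    have hπblock : ∀ i, ((π i : ℕ) < M ↔ (i:ℕ) < M) := by
      intro i
      rcases eq_or_ne i u with rfl | hiu
      · rw [hπdef, Equiv.swap_apply_left]; exact huv.symm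
      rcases eq_or_ne i v with rfl | hiv
      · rw [hπdef, Equiv.swap_apply_right]; exact huv
      · rw [hπdef, Equiv.swap_apply_of_ne_of_ne hiu hiv]
    set e := Equiv.prodCongr (Equiv.refl (SimpleGraph (Fin (2*M)))) (VN.gEquiv π) with hedef
    rw [PMF.toOuterMeasure_apply, PMF.toOuterMeasure_apply]
    rw [← Equiv.tsum_eq e
      (fun pr => Set.indicator {pr | VN.vnRank (Φ.toFun pr.1 (VN.obf o pr.2) v0) (o u) = k} (⇑F) pr)]
    apply tsum_congr
    rintro ⟨g₁, g₂⟩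
    show Set.indicator {pr | VN.vnRank (Φ.toFun pr.1 (VN.obf o pr.2) v0) (o u) = k} (⇑F)
          (g₁, g₂.map π.toEmbedding)
        = Set.indicator {pr | VN.vnRank (Φ.toFun pr.1 (VN.obf o pr.2) v0) (o v) = k} (⇑F) (g₁, g₂)
    have hFv : F (g₁, g₂.map π.toEmbedding) = F (g₁, g₂) := hFinv π hπblock g₁ g₂
    by_cases h0 : F (g₁, g₂) = 0
    · rw [Set.indicator_apply, Set.indicator_apply]
      split_ifs <;> simp [h0, hFv ▸ h0, hFv, h0, show F (g₁, SimpleGraph.map (⇑π) g₂) = 0 from hFv.trans h0]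
    · have hasym := hsupp g₁ g₂ h0
      have hrank : VN.vnRank (Φ.toFun g₁ (VN.obf o (g₂.map π.toEmbedding)) v0) (o u)
          = VN.vnRank (Φ.toFun g₁ (VN.obf o g₂) v0) (o v) := by
        have hc := Φ.consistent g₁ g₂ v0 (π.trans o) o v
        have horb : ∀ w, VN.InOrbit g₂ v w ↔ w = v := VN.inOrbit_iff_of_asym hasym v
        simp only [horb, exists_eq_left] at hc
        rw [VN.obf_trans] at hc
        have hπv : (π.trans o) v = o u := by
          rw [Equiv.trans_apply, hπdef, Equiv.swap_apply_right]
        rw [hπv] at hc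
        have hmem : VN.vnRank (Φ.toFun g₁ (VN.obf o g₂) v0) (o v)
            ∈ {r : ℕ | VN.vnRank (Φ.toFun g₁ (VN.obf o g₂) v0) (o v) = r} := rfl
        rw [← hc] at hmem
        exact hmem
      rw [Set.indicator_apply, Set.indicator_apply]
      simp only [Set.mem_setOf_eq, hrank, hFv]
  -- Part 2 helper: the ranks over all vertices sum to 1
  have hone : ∀ k : ℕ, 1 ≤ k → k ≤ 2*M →
      (∑ w : Fin (2*M),
        F.toOuterMeasure {pr | VN.vnRank (Φ.toFun pr.1 (VN.obf o pr.2) v0) (o w) = k}) = 1 := by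
    intro k hk1 hk2
    have hklt : k - 1 < 2*M := by omega
    simp only [PMF.toOuterMeasure_apply]
    rw [← Summable.tsum_finsetSum (fun i _ => ENNReal.summable), ← PMF.tsum_coe F]
    apply tsum_congr
    intro pr
    set T := Φ.toFun pr.1 (VN.obf o pr.2) v0 with hT
    set w₀ := o.symm (T.symm ⟨k-1, hklt⟩) with hw₀
    have hcond : ∀ w : Fin (2*M), (VN.vnRank T (o w) = k) ↔ w = w₀ := by
      intro w
      unfold VN.vnRank
      constructor
      · intro h
        have h1 : T (o w) = ⟨k-1, hklt⟩ := Fin.ext (by simpa using by omega)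
        have h2 : o w = T.symm ⟨k-1, hklt⟩ := by rw [← h1]; simp
        rw [hw₀, ← h2]; simp
      · rintro rfl
        rw [hw₀]
        simp only [Equiv.apply_symm_apply]
        omega
    calc (∑ w : Fin (2*M),
            Set.indicator {pr' | VN.vnRank (Φ.toFun pr'.1 (VN.obf o pr'.2) v0) (o w) = k} (⇑F) pr)
        = ∑ w : Fin (2*M), if w = w₀ then F pr else 0 := by
          apply Finset.sum_congr rfl
          intro w _
          rw [Set.indicator_apply]
          exact if_congr (hcond w) rfl rfl
      _ = F pr := by rw [Finset.sum_ite_eq']; simp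
  refine ⟨fun u v huv k _ _ => key u v huv k, ?_⟩
  intro u₁ u₂ h₁ h₂ k hk1 hk2
  set A := F.toOuterMeasure {pr | VN.vnRank (Φ.toFun pr.1 (VN.obf o pr.2) v0) (o u₁) = k} with hA
  set B := F.toOuterMeasure {pr | VN.vnRank (Φ.toFun pr.1 (VN.obf o pr.2) v0) (o u₂) = k} with hB
  have h₂' : ¬ ((u₂ : ℕ) < M) := not_lt.mpr h₂
  have hsum := hone k hk1 hk2
  have hrw : (∑ w : Fin (2*M),
      F.toOuterMeasure {pr | VN.vnRank (Φ.toFun pr.1 (VN.obf o pr.2) v0) (o w) = k})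
      = ∑ i ∈ Finset.range (2*M), (if i < M then A else B) := by
    rw [← Fin.sum_univ_eq_sum_range (fun i => if i < M then A else B) (2*M)]
    apply Finset.sum_congr rfl
    intro w _
    by_cases hw : (w : ℕ) < M
    · rw [if_pos hw, hA]; exact key w u₁ (iff_of_true hw h₁) k
    · rw [if_neg hw, hB]; exact key w u₂ (iff_of_false hw h₂') k
  have hsplit : (∑ i ∈ Finset.range (2*M), (if i < M then A else B)) = M • A + M • B := by
    rw [Finset.range_eq_Ico, ← Finset.sum_Ico_consecutive _ (Nat.zero_le M) (by omega : M ≤ 2*M)]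
    congr 1
    · calc (∑ i ∈ Finset.Ico 0 M, (if i < M then A else B))
          = ∑ _i ∈ Finset.Ico 0 M, A := by
            apply Finset.sum_congr rfl
            intro i hi
            rw [if_pos (Finset.mem_Ico.mp hi).2]
        _ = M • A := by rw [Finset.sum_const, Nat.card_Ico]; simp
    · calc (∑ i ∈ Finset.Ico M (2*M), (if i < M then A else B))
          = ∑ _i ∈ Finset.Ico M (2*M), B := by
            apply Finset.sum_congr rfl
            intro i hi
            rw [if_neg (not_lt.mpr (Finset.mem_Ico.mp hi).1)]
        _ = M • B := by
            rw [Finset.sum_const, Nat.card_Ico]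
            congr 1
            omega
  have heq : (M • A) + (M • B) = 1 := by rw [← hsplit, ← hrw]; exact hsum
  have hAt : A ≠ ⊤ := ne_top_of_le_ne_top ENNReal.one_ne_top (hle1 _)
  have hBt : B ≠ ⊤ := ne_top_of_le_ne_top ENNReal.one_ne_top (hle1 _)
  have heq' : (M : ℝ≥0∞) * A + (M : ℝ≥0∞) * B = 1 := by
    rw [← nsmul_eq_mul, ← nsmul_eq_mul]; exact heq
  have htr := congrArg ENNReal.toReal heq'
  rw [ENNReal.toReal_add (ENNReal.mul_ne_top (ENNReal.natCast_ne_top M) hAt)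
      (ENNReal.mul_ne_top (ENNReal.natCast_ne_top M) hBt),
    ENNReal.toReal_mul, ENNReal.toReal_mul, ENNReal.toReal_one] at htr
  have hm : ((M : ℝ≥0∞)).toReal = (M : ℝ) := by simp
  rw [hm] at htr
  rw [mul_add]
  linarith
end
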